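/- arXiv:2104.09464 — 6 statements merged into one kernel-verified Lean document; each statement's English description precedes it below -/
import Mathlib

section
/- If l₁ + l₂ > n, then the two-contour system cannot be in a state of free motion; i.e., there is no limit cycle on which every particle of both clusters moves at every time step. -/
open scoped Classical

namespace TwoContour

/-- A state of the two-contour system: the cells of the front particles
of cluster 1 and cluster 2. -/
abbrev State (n : ℕ) := ZMod n × ZMod n

/-- Cell `c` is occupied by a cluster of length `l` whose front particle is at cell `α`:
the cluster occupies cells `α, α-1, …, α-(l-1)` (mod `n`). -/
def occ (n : ℕ) (α : ZMod n) (l : ℕ) (c : ZMod n) : Prop :=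
  ∃ k : ℕ, k < l ∧ c = α - (k : ZMod n)

/-- Cluster 1 is delayed: its front stands at node 1 (cell 0 of contour 1) while
cluster 2 occupies node 1 (cells `d`, `d+1` of contour 2) or stands at node 1
(competition at node 1 is resolved in favor of cluster 2); or its front stands at
node 2 (cell `d` of contour 1) while cluster 2 occupies node 2 (cells 0, 1 of contour 2). -/
def blocked1 (n l1 l2 d : ℕ) (s : State n) : Prop :=
  (s.1 = 0 ∧ ((occ n s.2 l2 (d : ZMod n) ∧ occ n s.2 l2 ((d : ZMod n) + 1)) ∨ s.2 = (d : ZMod n)))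
  ∨ (s.1 = (d : ZMod n) ∧ occ n s.2 l2 0 ∧ occ n s.2 l2 1)

/-- Cluster 2 is delayed: its front stands at node 2 (cell 0 of contour 2) while
cluster 1 occupies node 2 (cells `d`, `d+1` of contour 1) or stands at node 2
(competition at node 2 is resolved in favor of cluster 1); or its front stands at
node 1 (cell `d` of contour 2) while cluster 1 occupies node 1 (cells 0, 1 of contour 1). -/
def blocked2 (n l1 l2 d : ℕ) (s : State n) : Prop :=
  (s.2 = 0 ∧ ((occ n s.1 l1 (d : ZMod n) ∧ occ n s.1 l1 ((d : ZMod n) + 1)) ∨ s.1 = (d : ZMod n)))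
  ∨ (s.2 = (d : ZMod n) ∧ occ n s.1 l1 0 ∧ occ n s.1 l1 1)

/-- One time step of the deterministic dynamics: each non-delayed cluster advances one cell. -/
noncomputable def step (n l1 l2 d : ℕ) (s : State n) : State n :=
  (if blocked1 n l1 l2 d s then s.1 else s.1 + 1,
   if blocked2 n l1 l2 d s then s.2 else s.2 + 1)

/-- A state of free motion: from this state on, neither cluster is ever delayed. -/
def FreeState (n l1 l2 d : ℕ) (s : State n) : Prop :=
  ∀ t : ℕ, ¬ blocked1 n l1 l2 d ((step n l1 l2 d)^[t] s) ∧
           ¬ blocked2 n l1 l2 d ((step n l1 l2 d)^[t] s)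

/-- A state of collapse: from this state on, no particle of either cluster ever moves. -/
def CollapseState (n l1 l2 d : ℕ) (s : State n) : Prop :=
  ∀ t : ℕ, blocked1 n l1 l2 d ((step n l1 l2 d)^[t] s) ∧
           blocked2 n l1 l2 d ((step n l1 l2 d)^[t] s)

/-- `s` lies on a limit cycle of period `T`. -/
def Periodic (n l1 l2 d : ℕ) (s : State n) (T : ℕ) : Prop :=
  0 < T ∧ (step n l1 l2 d)^[T] s = s

/-- Number of moves of cluster 1 during the first `T` steps starting from `s`. -/
noncomputable def moves1 (n l1 l2 d : ℕ) (s : State n) (T : ℕ) : ℕ :=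
  ((Finset.range T).filter (fun t => ¬ blocked1 n l1 l2 d ((step n l1 l2 d)^[t] s))).card

/-- Number of moves of cluster 2 during the first `T` steps starting from `s`. -/
noncomputable def moves2 (n l1 l2 d : ℕ) (s : State n) (T : ℕ) : ℕ :=
  ((Finset.range T).filter (fun t => ¬ blocked2 n l1 l2 d ((step n l1 l2 d)^[t] s))).card

/-- An admissible state: the two clusters do not occupy the same node simultaneously. -/
def Admissible (n l1 l2 d : ℕ) (s : State n) : Prop :=
  ¬ (occ n s.1 l1 0 ∧ occ n s.1 l1 1 ∧
     occ n s.2 l2 (d : ZMod n) ∧ occ n s.2 l2 ((d : ZMod n) + 1)) ∧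
  ¬ (occ n s.1 l1 (d : ZMod n) ∧ occ n s.1 l1 ((d : ZMod n) + 1) ∧
     occ n s.2 l2 0 ∧ occ n s.2 l2 1)


lemma free_iter (n l1 l2 d : ℕ) (s : State n) (hs : FreeState n l1 l2 d s) (t : ℕ) :
    (step n l1 l2 d)^[t] s = (s.1 + t, s.2 + t) := by
  induction t with
  | zero => simp
  | succ t ih =>
    have h1 := (hs t).1
    have h2 := (hs t).2
    rw [Function.iterate_succ_apply', ih]
    rw [ih] at h1 h2
    simp only [step, if_neg h1, if_neg h2]
    push_cast
    exact Prod.ext (by push_cast; ring) (by push_cast; ring)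

theorem stmt0 (n l1 l2 d : ℕ) (hn : 0 < n) (hd : 0 < d) (h2d : 2 * d ≤ n)
    (hl1pos : 0 < l1) (hl1n : l1 < n) (hl2pos : 0 < l2) (hl2n : l2 < n) (h12 : l1 ≤ l2)
    (h : l1 + l2 > n) :
    ∀ s : State n, ¬ FreeState n l1 l2 d s := by
  intro s hs
  haveI : NeZero n := ⟨hn.ne'⟩
  set δ : ZMod n := s.2 - s.1 with hδ
  have key1 : ¬ blocked1 n l1 l2 d (0, δ) := by
    have hfree := (hs ((-s.1).val)).1
    rw [free_iter n l1 l2 d s hs] at hfree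
    have hc : (((-s.1).val : ℕ) : ZMod n) = -s.1 := ZMod.natCast_rightInverse _
    rw [show (s.1 + (((-s.1).val : ℕ) : ZMod n), s.2 + (((-s.1).val : ℕ) : ZMod n)) =
        ((0 : ZMod n), δ) by rw [hc, hδ]; exact Prod.ext (by ring) (by ring)] at hfree
    exact hfree
  have key2 : ¬ blocked2 n l1 l2 d ((d : ZMod n) - δ, (d : ZMod n)) := by
    have hfree := (hs (((d : ZMod n) - s.2).val)).2
    rw [free_iter n l1 l2 d s hs] at hfree
    have hc : ((((d : ZMod n) - s.2).val : ℕ) : ZMod n) = (d : ZMod n) - s.2 :=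
      ZMod.natCast_rightInverse _
    rw [show (s.1 + (((((d : ZMod n) - s.2).val : ℕ)) : ZMod n),
        s.2 + (((((d : ZMod n) - s.2).val : ℕ)) : ZMod n)) = ((d : ZMod n) - δ, (d : ZMod n)) by
      rw [hc, hδ]; exact Prod.ext (by ring) (by ring)] at hfree
    exact hfree
  set a : ZMod n := δ - (d : ZMod n) with ha
  have hδd : δ ≠ (d : ZMod n) := fun hEq => key1 (Or.inl ⟨rfl, Or.inr hEq⟩)
  have hane : a ≠ 0 := fun hz => hδd (by rwa [ha, sub_eq_zero] at hz)
  have haval_pos : 0 < a.val := Nat.pos_of_ne_zero (fun hz => hane (by rwa [ZMod.val_eq_zero] at hz))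
  have hcasta : ((a.val : ℕ) : ZMod n) = a := ZMod.natCast_rightInverse _
  -- from key1 : a.val ≥ l2
  have hocc2 : ¬ (occ n δ l2 (d : ZMod n) ∧ occ n δ l2 ((d : ZMod n) + 1)) :=
    fun hp => key1 (Or.inl ⟨rfl, Or.inl hp⟩)
  have haval_ge : l2 ≤ a.val := by
    by_contra hlt
    push_neg at hlt
    apply hocc2
    constructor
    · exact ⟨a.val, hlt, by rw [hcasta, ha]; ring⟩
    · refine ⟨a.val - 1, by omega, ?_⟩
      have : ((a.val - 1 : ℕ) : ZMod n) = a - 1 := by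
        rw [Nat.cast_sub haval_pos, hcasta]; simp
      rw [this, ha]; ring
  -- the cell d - δ = -a
  have hb : (d : ZMod n) - δ = -a := by rw [ha]; ring
  have hbne : (-a : ZMod n) ≠ 0 := neg_ne_zero.mpr hane
  have hbval : (-a : ZMod n).val = n - a.val := by
    rw [ZMod.neg_val, if_neg hane]
  have hbpos : 0 < (-a : ZMod n).val := Nat.pos_of_ne_zero
    (fun hz => hbne (by rwa [ZMod.val_eq_zero] at hz))
  have hbl1 : (-a : ZMod n).val < l1 := by
    have hav : a.val < n := ZMod.val_lt a
    omega
  have hcastb : (((-a : ZMod n).val : ℕ) : ZMod n) = -a := ZMod.natCast_rightInverse _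
  apply key2
  refine Or.inr ⟨rfl, ⟨(-a : ZMod n).val, hbl1, ?_⟩, ⟨(-a : ZMod n).val - 1, by omega, ?_⟩⟩
  · rw [hb, hcastb]; ring
  · have : (((-a : ZMod n).val - 1 : ℕ) : ZMod n) = -a - 1 := by
      rw [Nat.cast_sub hbpos, hcastb]; simp
    rw [hb, this]; ring

end TwoContour
end

section
/- On any limit cycle of the two-contour system, either both clusters have strictly positive average velocity, or the system is in a state of collapse (neither cluster ever moves). -/
open scoped Classical

namespace TwoContour

/- ====================== auxiliary lemmas ====================== -/

lemma aux_natCast_injOn {n : ℕ} {x y : ℕ} (hx : x < n) (hy : y < n)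
    (h : (x : ZMod n) = y) : x = y := by
  have h2 := (ZMod.natCast_eq_natCast_iff x y n).1 h
  rwa [Nat.ModEq, Nat.mod_eq_of_lt hx, Nat.mod_eq_of_lt hy] at h2

lemma aux_not_occ_shift {n l : ℕ} (hl : 0 < l) (hln : l < n) (c : ZMod n) :
    ¬ occ n (c + (l : ZMod n)) l c := by
  rintro ⟨k, hk, he⟩
  have h2 : ((l : ℕ) : ZMod n) = (k : ZMod n) := by linear_combination -he
  have := aux_natCast_injOn hln (hk.trans hln) h2
  omega

lemma moves1_zero (n l1 l2 d : ℕ) (s : State n) : moves1 n l1 l2 d s 0 = 0 := by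
  simp [moves1]

lemma moves2_zero (n l1 l2 d : ℕ) (s : State n) : moves2 n l1 l2 d s 0 = 0 := by
  simp [moves2]

lemma moves1_succ (n l1 l2 d : ℕ) (s : State n) (t : ℕ) :
    moves1 n l1 l2 d s (t + 1) = moves1 n l1 l2 d s t +
      if ¬ blocked1 n l1 l2 d ((step n l1 l2 d)^[t] s) then 1 else 0 := by
  unfold moves1
  rw [Finset.range_add_one, Finset.filter_insert]
  split_ifs with h
  · simp
  · rw [Finset.card_insert_of_notMem (by simp)]

lemma moves2_succ (n l1 l2 d : ℕ) (s : State n) (t : ℕ) :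
    moves2 n l1 l2 d s (t + 1) = moves2 n l1 l2 d s t +
      if ¬ blocked2 n l1 l2 d ((step n l1 l2 d)^[t] s) then 1 else 0 := by
  unfold moves2
  rw [Finset.range_add_one, Finset.filter_insert]
  split_ifs with h
  · simp
  · rw [Finset.card_insert_of_notMem (by simp)]

lemma iterate_eq (n l1 l2 d : ℕ) (s : State n) : ∀ t : ℕ,
    (step n l1 l2 d)^[t] s =
      (s.1 + (moves1 n l1 l2 d s t : ZMod n), s.2 + (moves2 n l1 l2 d s t : ZMod n)) := by
  intro t
  induction t with
  | zero => simp [moves1_zero, moves2_zero]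
  | succ t ih =>
    rw [Function.iterate_succ_apply', moves1_succ, moves2_succ, ih]
    simp only [step, Prod.mk.injEq]
    constructor <;> split_ifs with h <;> push_cast <;> ring

lemma aux_reach {m : ℕ → ℕ} (h0 : m 0 = 0) (hstep : ∀ t, m (t + 1) ≤ m t + 1) :
    ∀ T k, k ≤ m T → ∃ t ≤ T, m t = k := by
  intro T
  induction T with
  | zero => intro k hk; exact ⟨0, le_refl 0, by omega⟩
  | succ T ih =>
    intro k hk
    by_cases h : k ≤ m T
    · obtain ⟨t, ht, he⟩ := ih k h; exact ⟨t, ht.trans (Nat.le_succ T), he⟩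
    · exact ⟨T + 1, le_refl _, by have := hstep T; omega⟩

lemma aux_periodic_forall {α : Type*} {f : α → α} {s : α} {T : ℕ} (hT : 0 < T)
    (hper : f^[T] s = s) (P : α → Prop) (h : ∀ t < T, P (f^[t] s)) (t : ℕ) :
    P (f^[t] s) := by
  have hmul : ∀ q, f^[T * q] s = s := by
    intro q; rw [Function.iterate_mul]; exact Function.iterate_fixed hper q
  have ht : f^[t] s = f^[t % T] s := by
    conv_lhs => rw [← Nat.div_add_mod t T, Nat.add_comm, Function.iterate_add_apply,
      hmul]
  rw [ht]; exact h _ (Nat.mod_lt t hT)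

lemma aux_exists_unblocked (n l d : ℕ) (hd0 : 0 < d) (hdn : d < n) (hl : 0 < l)
    (hln : l < n) (a : ZMod n) :
    ∃ b : ZMod n,
      ¬ ((a = 0 ∧ ((occ n b l (d : ZMod n) ∧ occ n b l ((d : ZMod n) + 1)) ∨ b = (d : ZMod n)))
        ∨ (a = (d : ZMod n) ∧ occ n b l 0 ∧ occ n b l 1)) := by
  have hn : 0 < n := hd0.trans hdn
  by_cases ha : a = 0
  · refine ⟨(d : ZMod n) + (l : ZMod n), ?_⟩
    rintro (⟨-, ⟨hocc, -⟩ | hbd⟩ | ⟨had, -⟩)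
    · exact aux_not_occ_shift hl hln (d : ZMod n) hocc
    · have h2 : ((l : ℕ) : ZMod n) = ((0 : ℕ) : ZMod n) := by push_cast; linear_combination hbd
      have := aux_natCast_injOn hln hn h2
      omega
    · rw [ha] at had
      have : (0 : ℕ) = d := aux_natCast_injOn hn hdn (by exact_mod_cast had)
      omega
  · refine ⟨(0 : ZMod n) + (l : ZMod n), ?_⟩
    rintro (⟨ha0, -⟩ | ⟨-, hocc0, -⟩)
    · exact ha ha0
    · exact aux_not_occ_shift hl hln 0 hocc0

theorem stmt1 (n l1 l2 d : ℕ) (hn : 0 < n) (hd : 0 < d) (h2d : 2 * d ≤ n)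
    (hl1pos : 0 < l1) (hl1n : l1 < n) (hl2pos : 0 < l2) (hl2n : l2 < n) (h12 : l1 ≤ l2) :
    ∀ (s : State n) (T : ℕ), Admissible n l1 l2 d s → Periodic n l1 l2 d s T →
      (0 < moves1 n l1 l2 d s T ∧ 0 < moves2 n l1 l2 d s T) ∨
      CollapseState n l1 l2 d s := by
  intro s T _hAdm hper
  obtain ⟨hT, hperT⟩ := hper
  haveI : NeZero n := ⟨hn.ne'⟩
  have hdn : d < n := by omega
  -- helper: moves = 0 gives blocked everywhere below T
  have hblk1 : moves1 n l1 l2 d s T = 0 → ∀ t < T, blocked1 n l1 l2 d ((step n l1 l2 d)^[t] s) := by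
    intro hz t ht
    by_contra hb
    have hmem : t ∈ (Finset.range T).filter
        (fun t => ¬ blocked1 n l1 l2 d ((step n l1 l2 d)^[t] s)) :=
      Finset.mem_filter.2 ⟨Finset.mem_range.2 ht, hb⟩
    rw [show (Finset.range T).filter
        (fun t => ¬ blocked1 n l1 l2 d ((step n l1 l2 d)^[t] s)) = ∅ from
      Finset.card_eq_zero.1 hz] at hmem
    exact absurd hmem (Finset.notMem_empty t)
  have hblk2 : moves2 n l1 l2 d s T = 0 → ∀ t < T, blocked2 n l1 l2 d ((step n l1 l2 d)^[t] s) := by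
    intro hz t ht
    by_contra hb
    have hmem : t ∈ (Finset.range T).filter
        (fun t => ¬ blocked2 n l1 l2 d ((step n l1 l2 d)^[t] s)) :=
      Finset.mem_filter.2 ⟨Finset.mem_range.2 ht, hb⟩
    rw [show (Finset.range T).filter
        (fun t => ¬ blocked2 n l1 l2 d ((step n l1 l2 d)^[t] s)) = ∅ from
      Finset.card_eq_zero.1 hz] at hmem
    exact absurd hmem (Finset.notMem_empty t)
  by_cases h1 : 0 < moves1 n l1 l2 d s T
  · by_cases h2 : 0 < moves2 n l1 l2 d s T
    · exact Or.inl ⟨h1, h2⟩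
    · -- cluster 2 never moves, cluster 1 moves: contradiction
      exfalso
      have h2z : moves2 n l1 l2 d s T = 0 := by omega
      have hb2 : ∀ t, blocked2 n l1 l2 d ((step n l1 l2 d)^[t] s) :=
        aux_periodic_forall hT hperT _ (hblk2 h2z)
      have hm2 : ∀ t, moves2 n l1 l2 d s t = 0 := by
        intro t
        unfold moves2
        rw [Finset.card_eq_zero, Finset.filter_eq_empty_iff]
        exact fun u _ => not_not_intro (hb2 u)
      have hiter : ∀ t, (step n l1 l2 d)^[t] s
          = (s.1 + (moves1 n l1 l2 d s t : ZMod n), s.2) := by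
        intro t
        rw [iterate_eq n l1 l2 d s t, hm2 t]
        simp
      have hcast : ((moves1 n l1 l2 d s T : ℕ) : ZMod n) = 0 := by
        have hp := hperT
        rw [hiter T] at hp
        have h1' := congrArg Prod.fst hp
        simp only at h1'
        linear_combination h1'
      have hdvd : n ∣ moves1 n l1 l2 d s T :=
        (ZMod.natCast_eq_zero_iff _ _).1 hcast
      have hge : n ≤ moves1 n l1 l2 d s T := Nat.le_of_dvd h1 hdvd
      have hreach : ∀ γ : ZMod n, ∃ t, ((step n l1 l2 d)^[t] s).1 = γ := by
        intro γ
        obtain ⟨t, -, hmt⟩ := aux_reach (moves1_zero n l1 l2 d s)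
          (fun u => by rw [moves1_succ]; split_ifs <;> omega) T ((γ - s.1).val)
          (le_trans (le_of_lt (ZMod.val_lt _)) hge)
        refine ⟨t, ?_⟩
        rw [hiter t, hmt]
        show s.1 + (((γ - s.1).val : ℕ) : ZMod n) = γ
        rw [ZMod.natCast_rightInverse (γ - s.1)]
        ring
      obtain ⟨b, hnb⟩ := aux_exists_unblocked n l1 d hd hdn hl1pos hl1n s.2
      obtain ⟨t, hbt⟩ := hreach b
      have hstate : (step n l1 l2 d)^[t] s = (b, s.2) := by
        rw [hiter t] at hbt ⊢
        exact Prod.ext hbt rfl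
      have hb := hb2 t
      rw [hstate] at hb
      exact hnb hb
  · by_cases h2 : 0 < moves2 n l1 l2 d s T
    · -- cluster 1 never moves, cluster 2 moves: contradiction
      exfalso
      have h1z : moves1 n l1 l2 d s T = 0 := by omega
      have hb1 : ∀ t, blocked1 n l1 l2 d ((step n l1 l2 d)^[t] s) :=
        aux_periodic_forall hT hperT _ (hblk1 h1z)
      have hm1 : ∀ t, moves1 n l1 l2 d s t = 0 := by
        intro t
        unfold moves1
        rw [Finset.card_eq_zero, Finset.filter_eq_empty_iff]
        exact fun u _ => not_not_intro (hb1 u)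
      have hiter : ∀ t, (step n l1 l2 d)^[t] s
          = (s.1, s.2 + (moves2 n l1 l2 d s t : ZMod n)) := by
        intro t
        rw [iterate_eq n l1 l2 d s t, hm1 t]
        simp
      have hcast : ((moves2 n l1 l2 d s T : ℕ) : ZMod n) = 0 := by
        have hp := hperT
        rw [hiter T] at hp
        have h2' := congrArg Prod.snd hp
        simp only at h2'
        linear_combination h2'
      have hdvd : n ∣ moves2 n l1 l2 d s T :=
        (ZMod.natCast_eq_zero_iff _ _).1 hcast
      have hge : n ≤ moves2 n l1 l2 d s T := Nat.le_of_dvd h2 hdvd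
      have hreach : ∀ γ : ZMod n, ∃ t, ((step n l1 l2 d)^[t] s).2 = γ := by
        intro γ
        obtain ⟨t, -, hmt⟩ := aux_reach (moves2_zero n l1 l2 d s)
          (fun u => by rw [moves2_succ]; split_ifs <;> omega) T ((γ - s.2).val)
          (le_trans (le_of_lt (ZMod.val_lt _)) hge)
        refine ⟨t, ?_⟩
        rw [hiter t, hmt]
        show s.2 + (((γ - s.2).val : ℕ) : ZMod n) = γ
        rw [ZMod.natCast_rightInverse (γ - s.2)]
        ring
      obtain ⟨b, hnb⟩ := aux_exists_unblocked n l2 d hd hdn hl2pos hl2n s.1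
      obtain ⟨t, hbt⟩ := hreach b
      have hstate : (step n l1 l2 d)^[t] s = (s.1, b) := by
        rw [hiter t] at hbt ⊢
        exact Prod.ext rfl hbt
      have hb := hb1 t
      rw [hstate] at hb
      exact hnb hb
    · -- collapse
      refine Or.inr fun t => ?_
      exact aux_periodic_forall hT hperT
        (fun x => blocked1 n l1 l2 d x ∧ blocked2 n l1 l2 d x)
        (fun u hu => ⟨hblk1 (by omega) u hu, hblk2 (by omega) u hu⟩) t

end TwoContour
end

section
/- A collapse state of the two-contour system exists if and only if l₁ > d and l₂ > d. -/
open scoped Classical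

namespace TwoContour

-- auxiliary lemmas
lemma cast_inj_of_lt {n a b : ℕ} (ha : a < n) (hb : b < n) (h : (a : ZMod n) = b) : a = b := by
  haveI : NeZero n := ⟨by omega⟩
  have := congrArg ZMod.val h
  rwa [ZMod.val_cast_of_lt ha, ZMod.val_cast_of_lt hb] at this

/-- No cluster of length `l < n` with front at `α` occupies cell `α + 1`. -/
lemma no_occ_succ {n l : ℕ} (hl : l < n) (α : ZMod n) (h : occ n α l (α + 1)) : False := by
  obtain ⟨k, hk, hc⟩ := h
  have h0 : ((k + 1 : ℕ) : ZMod n) = 0 := by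
    push_cast
    linear_combination hc
  rw [ZMod.natCast_eq_zero_iff] at h0
  have := Nat.le_of_dvd (by omega) h0
  omega

/-- If a cluster with front at cell `d` occupies cell `0`, then `d < l`. -/
lemma occ_front_d_zero {n l d : ℕ} (hl : l < n) (hdn : d < n)
    (h : occ n (d : ZMod n) l 0) : d < l := by
  obtain ⟨k, hk, hc⟩ := h
  have hkd : (k : ZMod n) = (d : ZMod n) := by linear_combination hc
  have := cast_inj_of_lt (by omega : k < n) hdn hkd
  omega

/-- If a cluster with front at cell `0` occupies cell `d`, then `d < l`
(using `2 * d ≤ n`). -/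
lemma occ_front_zero_d {n l d : ℕ} (hl : l < n) (hd : 0 < d) (h2d : 2 * d ≤ n)
    (h : occ n (0 : ZMod n) l (d : ZMod n)) : d < l := by
  obtain ⟨k, hk, hc⟩ := h
  have h0 : ((d + k : ℕ) : ZMod n) = 0 := by
    push_cast
    linear_combination hc
  rw [ZMod.natCast_eq_zero_iff] at h0
  have := Nat.le_of_dvd (by omega) h0
  omega

lemma occ_front_d_zero' {n l d : ℕ} (hdl : d < l) :
    occ n (d : ZMod n) l 0 :=
  ⟨d, hdl, by push_cast; ring⟩

lemma occ_front_d_one {n l d : ℕ} (hd : 0 < d) (hdl : d < l) :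
    occ n (d : ZMod n) l 1 := by
  refine ⟨d - 1, by omega, ?_⟩
  rw [Nat.cast_sub (by omega : 1 ≤ d)]
  push_cast
  ring

lemma step_fixed {n l1 l2 d : ℕ} {s : State n}
    (h1 : blocked1 n l1 l2 d s) (h2 : blocked2 n l1 l2 d s) :
    step n l1 l2 d s = s := by
  simp [step, if_pos h1, if_pos h2]


theorem stmt3 (n l1 l2 d : ℕ) (hn : 0 < n) (hd : 0 < d) (h2d : 2 * d ≤ n)
    (hl1pos : 0 < l1) (hl1n : l1 < n) (hl2pos : 0 < l2) (hl2n : l2 < n) (h12 : l1 ≤ l2) :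
    (∃ s : State n, Admissible n l1 l2 d s ∧ CollapseState n l1 l2 d s) ↔
      (d < l1 ∧ d < l2) := by
  have hdn : d < n := by omega
  have hd0 : (d : ZMod n) ≠ 0 := by
    intro h
    rw [ZMod.natCast_eq_zero_iff] at h
    have := Nat.le_of_dvd hd h
    omega
  constructor
  · rintro ⟨s, _hadm, hcol⟩
    obtain ⟨hb1, hb2⟩ := hcol 0
    simp only [Function.iterate_zero, id_eq] at hb1 hb2
    rcases hb1 with ⟨h10, hP⟩ | ⟨h1d, ho20, ho21⟩
    · rcases hb2 with ⟨h20, hQ⟩ | ⟨h2d', ho10, ho11⟩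
      · -- s = (0, 0)
        rcases hP with ⟨hP1, _⟩ | hsd
        · rcases hQ with ⟨hQ1, _⟩ | hsd'
          · rw [h20] at hP1
            rw [h10] at hQ1
            exact ⟨occ_front_zero_d hl1n hd h2d hQ1, occ_front_zero_d hl2n hd h2d hP1⟩
          · exact absurd (h10 ▸ hsd'.symm) hd0
        · exact absurd (h20 ▸ hsd.symm) hd0
      · -- s.1 = 0, s.2 = d : occ 0 l1 1 impossible
        rw [h10] at ho11
        exact absurd ho11 (fun h => no_occ_succ hl1n 0 (by simpa using h))
    · -- s.1 = d
      rcases hb2 with ⟨h20, _⟩ | ⟨h2d', ho10, _⟩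
      · rw [h20] at ho21
        exact absurd ho21 (fun h => no_occ_succ hl2n 0 (by simpa using h))
      · rw [h1d] at ho10
        rw [h2d'] at ho20
        exact ⟨occ_front_d_zero hl1n hdn ho10, occ_front_d_zero hl2n hdn ho20⟩
  · rintro ⟨hdl1, hdl2⟩
    refine ⟨((d : ZMod n), (d : ZMod n)), ?_, ?_⟩
    · constructor
      · rintro ⟨_, _, _, h⟩
        exact no_occ_succ hl2n (d : ZMod n) h
      · rintro ⟨_, h, _, _⟩
        exact no_occ_succ hl1n (d : ZMod n) h
    · have hb1 : blocked1 n l1 l2 d ((d : ZMod n), (d : ZMod n)) :=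
        Or.inr ⟨rfl, occ_front_d_zero' hdl2, occ_front_d_one hd hdl2⟩
      have hb2 : blocked2 n l1 l2 d ((d : ZMod n), (d : ZMod n)) :=
        Or.inr ⟨rfl, occ_front_d_zero' hdl1, occ_front_d_one hd hdl1⟩
      intro t
      rw [Function.iterate_fixed (step_fixed hb1 hb2) t]
      exact ⟨hb1, hb2⟩

end TwoContour
end

section
/- If l₂ ≤ d, l₂ ≤ n − 2d, and l₁ + l₂ > n − 2d, then depending on the initial state the two-contour system either enters free motion (v = 1) or reaches a limit cycle on which both clusters have average velocity v = n/(l₁ + l₂ + 2d). -/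
open scoped Classical

namespace TwoContour

/-- Parameter context. -/
def Ctx (n l1 l2 d : ℕ) : Prop :=
  0 < d ∧ 0 < l1 ∧ l1 ≤ l2 ∧ l2 ≤ d ∧ 2 * d + l2 ≤ n ∧ n < l1 + l2 + 2 * d

lemma cast_eq_iff {n x y : ℕ} (hx : x < n) (hy : y < n) :
    ((x : ZMod n) = (y : ZMod n)) ↔ x = y := by
  constructor
  · intro h
    rw [← ZMod.val_cast_of_lt hx, ← ZMod.val_cast_of_lt hy, h]
  · rintro rfl; rfl

lemma cast_sub_n {n x : ℕ} (h : n ≤ x) : ((x : ℕ) : ZMod n) = ((x - n : ℕ) : ZMod n) := by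
  conv_lhs => rw [show x = x - n + n from by omega]
  push_cast [ZMod.natCast_self]
  ring

lemma occ_iff {n l : ℕ} (β c : ZMod n) : occ n β l c ↔ ∃ k : ℕ, k < l ∧ β = c + (k : ZMod n) := by
  unfold occ
  constructor
  · rintro ⟨k, hk, h⟩; exact ⟨k, hk, by rw [h]; ring⟩
  · rintro ⟨k, hk, h⟩; exact ⟨k, hk, by rw [h]; ring⟩

lemma occ_pair_iff {n l : ℕ} (hl : l < n) (β c : ZMod n) :
    (occ n β l c ∧ occ n β l (c + 1)) ↔ ∃ j : ℕ, 1 ≤ j ∧ j < l ∧ β = c + (j : ZMod n) := by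
  constructor
  · rintro ⟨h1, h2⟩
    rw [occ_iff] at h1 h2
    obtain ⟨k, hk, hβ⟩ := h1
    obtain ⟨k', hk', hβ'⟩ := h2
    have hkk : ((k : ZMod n)) = ((k' + 1 : ℕ) : ZMod n) := by
      push_cast
      have := hβ.symm.trans hβ'
      -- c + k = c + 1 + k'
      have h' : (k : ZMod n) = 1 + (k' : ZMod n) := by
        have := congrArg (fun z => z - c) this
        simpa [add_sub_cancel_left, add_assoc, add_comm, add_left_comm, sub_eq_iff_eq_add] using this
      rw [h']; ring
    have : k = k' + 1 := (cast_eq_iff (by omega) (by omega)).mp hkk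
    exact ⟨k, by omega, hk, hβ⟩
  · rintro ⟨j, hj1, hjl, hβ⟩
    constructor
    · rw [occ_iff]; exact ⟨j, hjl, hβ⟩
    · rw [occ_iff]
      refine ⟨j - 1, by omega, ?_⟩
      rw [hβ]
      have : ((j - 1 : ℕ) : ZMod n) = (j : ZMod n) - 1 := by
        have : j - 1 + 1 = j := by omega
        calc ((j - 1 : ℕ) : ZMod n) = ((j - 1 + 1 : ℕ) : ZMod n) - 1 := by push_cast; ring
        _ = (j : ZMod n) - 1 := by rw [this]
      rw [this]; ring

lemma occ_pair01_iff {n l : ℕ} (hl : l < n) (β : ZMod n) :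
    (occ n β l 0 ∧ occ n β l 1) ↔ ∃ j : ℕ, 1 ≤ j ∧ j < l ∧ β = (j : ZMod n) := by
  have := occ_pair_iff hl β 0
  simpa using this

lemma blocked1_nat {n l1 l2 d : ℕ} (H : Ctx n l1 l2 d) {x y : ℕ} (hx : x < n) (hy : y < n) :
    blocked1 n l1 l2 d ((x : ZMod n), (y : ZMod n)) ↔
      ((x = 0 ∧ ∃ j : ℕ, j < l2 ∧ y = d + j) ∨ (x = d ∧ 1 ≤ y ∧ y < l2)) := by
  obtain ⟨hd, hl1, h12, h2d, hn2, h3⟩ := H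
  have hn : 0 < n := by omega
  have hl2n : l2 < n := by omega
  unfold blocked1
  simp only [occ_pair_iff hl2n, occ_pair01_iff hl2n]
  constructor
  · rintro (⟨hx0, ⟨j, hj1, hjl, hβ⟩ | hyd⟩ | ⟨hxd, j, hj1, hjl, hβ⟩)
    · have hx0' : x = 0 := (cast_eq_iff hx hn).mp (by simpa using hx0)
      have : ((y : ℕ) : ZMod n) = ((d + j : ℕ) : ZMod n) := by rw [hβ]; push_cast; ring
      have hy' : y = d + j := (cast_eq_iff hy (by omega)).mp this
      exact Or.inl ⟨hx0', j, hjl, hy'⟩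
    · have hx0' : x = 0 := (cast_eq_iff hx hn).mp (by simpa using hx0)
      have hy' : y = d := (cast_eq_iff hy (by omega)).mp hyd
      exact Or.inl ⟨hx0', 0, by omega, by omega⟩
    · have hxd' : x = d := (cast_eq_iff hx (by omega)).mp hxd
      have hy' : y = j := (cast_eq_iff hy (by omega)).mp hβ
      exact Or.inr ⟨hxd', by omega, by omega⟩
  · rintro (⟨hx0, j, hjl, hyd⟩ | ⟨hxd, hy1, hy2⟩)
    · rcases Nat.eq_zero_or_pos j with hj0 | hj0
      · refine Or.inl ⟨by rw [hx0]; simp, Or.inr ?_⟩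
        rw [hyd, hj0]; simp
      · refine Or.inl ⟨by rw [hx0]; simp, Or.inl ⟨j, hj0, hjl, ?_⟩⟩
        rw [hyd]; push_cast; ring
    · exact Or.inr ⟨by rw [hxd], y, hy1, hy2, rfl⟩

lemma blocked2_nat {n l1 l2 d : ℕ} (H : Ctx n l1 l2 d) {x y : ℕ} (hx : x < n) (hy : y < n) :
    blocked2 n l1 l2 d ((x : ZMod n), (y : ZMod n)) ↔
      ((y = 0 ∧ ∃ j : ℕ, j < l1 ∧ x = d + j) ∨ (y = d ∧ 1 ≤ x ∧ x < l1)) := by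
  obtain ⟨hd, hl1, h12, h2d, hn2, h3⟩ := H
  have hn : 0 < n := by omega
  have hl1n : l1 < n := by omega
  unfold blocked2
  simp only [occ_pair_iff hl1n, occ_pair01_iff hl1n]
  constructor
  · rintro (⟨hy0, ⟨j, hj1, hjl, hβ⟩ | hxd⟩ | ⟨hyd, j, hj1, hjl, hβ⟩)
    · have hy0' : y = 0 := (cast_eq_iff hy hn).mp (by simpa using hy0)
      have : ((x : ℕ) : ZMod n) = ((d + j : ℕ) : ZMod n) := by rw [hβ]; push_cast; ring
      have hx' : x = d + j := (cast_eq_iff hx (by omega)).mp this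
      exact Or.inl ⟨hy0', j, hjl, hx'⟩
    · have hy0' : y = 0 := (cast_eq_iff hy hn).mp (by simpa using hy0)
      have hx' : x = d := (cast_eq_iff hx (by omega)).mp hxd
      exact Or.inl ⟨hy0', 0, by omega, by omega⟩
    · have hyd' : y = d := (cast_eq_iff hy (by omega)).mp hyd
      have hx' : x = j := (cast_eq_iff hx (by omega)).mp hβ
      exact Or.inr ⟨hyd', by omega, by omega⟩
  · rintro (⟨hy0, j, hjl, hxd⟩ | ⟨hyd, hx1, hx2⟩)
    · rcases Nat.eq_zero_or_pos j with hj0 | hj0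
      · refine Or.inl ⟨by rw [hy0]; simp, Or.inr ?_⟩
        rw [hxd, hj0]; simp
      · refine Or.inl ⟨by rw [hy0]; simp, Or.inl ⟨j, hj0, hjl, ?_⟩⟩
        rw [hxd]; push_cast; ring
    · exact Or.inr ⟨by rw [hyd], x, hx1, hx2, rfl⟩

section Dyn

variable {n l1 l2 d : ℕ}

lemma step_move12 (a b : ZMod n) (h1 : ¬ blocked1 n l1 l2 d (a, b))
    (h2 : ¬ blocked2 n l1 l2 d (a, b)) : step n l1 l2 d (a, b) = (a + 1, b + 1) := by
  simp [step, h1, h2]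

lemma step_move1 (a b : ZMod n) (h1 : ¬ blocked1 n l1 l2 d (a, b))
    (h2 : blocked2 n l1 l2 d (a, b)) : step n l1 l2 d (a, b) = (a + 1, b) := by
  simp [step, h1, h2]

lemma step_move2 (a b : ZMod n) (h1 : blocked1 n l1 l2 d (a, b))
    (h2 : ¬ blocked2 n l1 l2 d (a, b)) : step n l1 l2 d (a, b) = (a, b + 1) := by
  simp [step, h1, h2]

lemma cast_succ (x : ℕ) : ((x : ℕ) : ZMod n) + 1 = ((x + 1 : ℕ) : ZMod n) := by
  push_cast; ring

/-- Funnel A: from `(d+j, 0)` the system reaches `(d+l1, 0)`. -/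
lemma funnelA (H : Ctx n l1 l2 d) : ∀ k j : ℕ, j + k = l1 →
    (step n l1 l2 d)^[k] (((d + j : ℕ) : ZMod n), ((0 : ℕ) : ZMod n)) =
      (((d + l1 : ℕ) : ZMod n), ((0 : ℕ) : ZMod n)) := by
  intro k
  induction k with
  | zero =>
    intro j hj
    obtain rfl : j = l1 := by omega
    rw [Function.iterate_zero_apply]
  | succ k ih =>
    intro j hj
    obtain ⟨hd, hl1, h12, h2d, hn2, h3⟩ := id H
    have hb1 : ¬ blocked1 n l1 l2 d (((d + j : ℕ) : ZMod n), ((0 : ℕ) : ZMod n)) := by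
      rw [blocked1_nat H (by omega) (by omega)]
      rintro (⟨e1, i, hi, e2⟩ | ⟨e1, e2, e3⟩) <;> omega
    have hb2 : blocked2 n l1 l2 d (((d + j : ℕ) : ZMod n), ((0 : ℕ) : ZMod n)) := by
      rw [blocked2_nat H (by omega) (by omega)]
      exact Or.inl ⟨rfl, j, by omega, rfl⟩
    rw [Function.iterate_succ_apply, step_move1 _ _ hb1 hb2, cast_succ]
    rw [show d + j + 1 = d + (j + 1) from by omega]
    exact ih (j + 1) (by omega)

/-- Funnel B, part 1: from `(0, d+j)` the system reaches `(0, d+l2)`. -/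
lemma funnelB1 (H : Ctx n l1 l2 d) : ∀ k j : ℕ, j + k = l2 →
    (step n l1 l2 d)^[k] (((0 : ℕ) : ZMod n), ((d + j : ℕ) : ZMod n)) =
      (((0 : ℕ) : ZMod n), ((d + l2 : ℕ) : ZMod n)) := by
  intro k
  induction k with
  | zero =>
    intro j hj
    obtain rfl : j = l2 := by omega
    rw [Function.iterate_zero_apply]
  | succ k ih =>
    intro j hj
    obtain ⟨hd, hl1, h12, h2d, hn2, h3⟩ := id H
    have hb1 : blocked1 n l1 l2 d (((0 : ℕ) : ZMod n), ((d + j : ℕ) : ZMod n)) := by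
      rw [blocked1_nat H (by omega) (by omega)]
      exact Or.inl ⟨rfl, j, by omega, rfl⟩
    have hb2 : ¬ blocked2 n l1 l2 d (((0 : ℕ) : ZMod n), ((d + j : ℕ) : ZMod n)) := by
      rw [blocked2_nat H (by omega) (by omega)]
      rintro (⟨e1, i, hi, e2⟩ | ⟨e1, e2, e3⟩) <;> omega
    rw [Function.iterate_succ_apply, step_move2 _ _ hb1 hb2, cast_succ]
    rw [show d + j + 1 = d + (j + 1) from by omega]
    exact ih (j + 1) (by omega)

/-- Funnel B, part 2: from `(0, d+l2)` the system moves freely. -/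
lemma funnelB2 (H : Ctx n l1 l2 d) : ∀ u : ℕ, u ≤ n - d - l2 →
    (step n l1 l2 d)^[u] (((0 : ℕ) : ZMod n), ((d + l2 : ℕ) : ZMod n)) =
      (((u : ℕ) : ZMod n), ((d + l2 + u : ℕ) : ZMod n)) := by
  intro u
  induction u with
  | zero => intro _; simp
  | succ u ih =>
    intro hu
    obtain ⟨hd, hl1, h12, h2d, hn2, h3⟩ := id H
    rw [Function.iterate_succ_apply', ih (by omega)]
    have hb1 : ¬ blocked1 n l1 l2 d (((u : ℕ) : ZMod n), ((d + l2 + u : ℕ) : ZMod n)) := by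
      rw [blocked1_nat H (by omega) (by omega)]
      rintro (⟨e1, i, hi, e2⟩ | ⟨e1, e2, e3⟩) <;> omega
    have hb2 : ¬ blocked2 n l1 l2 d (((u : ℕ) : ZMod n), ((d + l2 + u : ℕ) : ZMod n)) := by
      rw [blocked2_nat H (by omega) (by omega)]
      rintro (⟨e1, i, hi, e2⟩ | ⟨e1, e2, e3⟩) <;> omega
    rw [step_move12 _ _ hb1 hb2, cast_succ, cast_succ]
    have e : d + l2 + (u + 1) = d + l2 + u + 1 := by omega
    rw [e]

/-- Funnel C: from `(d, j)` (`1 ≤ j ≤ l2`) the system reaches `(d, l2)`. -/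
lemma funnelC (H : Ctx n l1 l2 d) : ∀ k j : ℕ, 1 ≤ j → j + k = l2 →
    (step n l1 l2 d)^[k] (((d : ℕ) : ZMod n), ((j : ℕ) : ZMod n)) =
      (((d : ℕ) : ZMod n), ((l2 : ℕ) : ZMod n)) := by
  intro k
  induction k with
  | zero =>
    intro j _ hj
    obtain rfl : j = l2 := by omega
    rw [Function.iterate_zero_apply]
  | succ k ih =>
    intro j hj1 hj
    obtain ⟨hd, hl1, h12, h2d, hn2, h3⟩ := id H
    have hb1 : blocked1 n l1 l2 d (((d : ℕ) : ZMod n), ((j : ℕ) : ZMod n)) := by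
      rw [blocked1_nat H (by omega) (by omega)]
      exact Or.inr ⟨rfl, hj1, by omega⟩
    have hb2 : ¬ blocked2 n l1 l2 d (((d : ℕ) : ZMod n), ((j : ℕ) : ZMod n)) := by
      rw [blocked2_nat H (by omega) (by omega)]
      rintro (⟨e1, i, hi, e2⟩ | ⟨e1, e2, e3⟩) <;> omega
    rw [Function.iterate_succ_apply, step_move2 _ _ hb1 hb2, cast_succ]
    exact ih (j + 1) (by omega) (by omega)

/-- Funnel D: from `(j, d)` (`1 ≤ j ≤ l1`) the system reaches `(l1, d)`. -/
lemma funnelD (H : Ctx n l1 l2 d) : ∀ k j : ℕ, 1 ≤ j → j + k = l1 →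
    (step n l1 l2 d)^[k] (((j : ℕ) : ZMod n), ((d : ℕ) : ZMod n)) =
      (((l1 : ℕ) : ZMod n), ((d : ℕ) : ZMod n)) := by
  intro k
  induction k with
  | zero =>
    intro j _ hj
    obtain rfl : j = l1 := by omega
    rw [Function.iterate_zero_apply]
  | succ k ih =>
    intro j hj1 hj
    obtain ⟨hd, hl1, h12, h2d, hn2, h3⟩ := id H
    have hb1 : ¬ blocked1 n l1 l2 d (((j : ℕ) : ZMod n), ((d : ℕ) : ZMod n)) := by
      rw [blocked1_nat H (by omega) (by omega)]
      rintro (⟨e1, i, hi, e2⟩ | ⟨e1, e2, e3⟩) <;> omega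
    have hb2 : blocked2 n l1 l2 d (((j : ℕ) : ZMod n), ((d : ℕ) : ZMod n)) := by
      rw [blocked2_nat H (by omega) (by omega)]
      exact Or.inr ⟨rfl, hj1, by omega⟩
    rw [Function.iterate_succ_apply, step_move1 _ _ hb1 hb2, cast_succ]
    exact ih (j + 1) (by omega) (by omega)

/-- If a state lies on an everywhere-unblocked `n`-cycle, it is a free state. -/
lemma free_of_cycle (hn : 0 < n) {s : State n}
    (hcyc : (step n l1 l2 d)^[n] s = s)
    (h : ∀ r, r < n → ¬ blocked1 n l1 l2 d ((step n l1 l2 d)^[r] s) ∧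
        ¬ blocked2 n l1 l2 d ((step n l1 l2 d)^[r] s)) :
    FreeState n l1 l2 d s := by
  intro t
  have key : (step n l1 l2 d)^[t] s = (step n l1 l2 d)^[t % n] s := by
    conv_lhs => rw [show t = t % n + n * (t / n) from (Nat.mod_add_div t n).symm]
    rw [Function.iterate_add_apply, Function.iterate_mul,
      Function.iterate_fixed hcyc (t / n)]
  rw [key]
  exact h _ (Nat.mod_lt _ hn)

lemma notblockedC (H : Ctx n l1 l2 d) {r : ℕ} (hr : r < n) :
    ¬ blocked1 n l1 l2 d (((d + r : ℕ) : ZMod n), ((l2 + r : ℕ) : ZMod n)) ∧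
    ¬ blocked2 n l1 l2 d (((d + r : ℕ) : ZMod n), ((l2 + r : ℕ) : ZMod n)) := by
  obtain ⟨hd, hl1, h12, h2d, hn2, h3⟩ := id H
  rcases lt_or_ge (d + r) n with hc1 | hc1
  · have hc2 : l2 + r < n := by omega
    constructor
    · rw [blocked1_nat H (by omega) (by omega)]
      rintro (⟨e1, i, hi, e2⟩ | ⟨e1, e2, e3⟩) <;> omega
    · rw [blocked2_nat H (by omega) (by omega)]
      rintro (⟨e1, i, hi, e2⟩ | ⟨e1, e2, e3⟩) <;> omega
  · rw [cast_sub_n (x := d + r) hc1]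
    rcases lt_or_ge (l2 + r) n with hc2 | hc2
    · constructor
      · rw [blocked1_nat H (by omega) (by omega)]
        rintro (⟨e1, i, hi, e2⟩ | ⟨e1, e2, e3⟩) <;> omega
      · rw [blocked2_nat H (by omega) (by omega)]
        rintro (⟨e1, i, hi, e2⟩ | ⟨e1, e2, e3⟩) <;> omega
    · rw [cast_sub_n (x := l2 + r) hc2]
      constructor
      · rw [blocked1_nat H (by omega) (by omega)]
        rintro (⟨e1, i, hi, e2⟩ | ⟨e1, e2, e3⟩) <;> omega
      · rw [blocked2_nat H (by omega) (by omega)]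
        rintro (⟨e1, i, hi, e2⟩ | ⟨e1, e2, e3⟩) <;> omega

lemma orbitC (H : Ctx n l1 l2 d) : ∀ r : ℕ, r ≤ n →
    (step n l1 l2 d)^[r] (((d : ℕ) : ZMod n), ((l2 : ℕ) : ZMod n)) =
      (((d + r : ℕ) : ZMod n), ((l2 + r : ℕ) : ZMod n)) := by
  intro r
  induction r with
  | zero => intro _; simp
  | succ r ih =>
    intro hr
    rw [Function.iterate_succ_apply', ih (by omega)]
    obtain ⟨hb1, hb2⟩ := notblockedC H (r := r) (by omega)
    rw [step_move12 _ _ hb1 hb2, cast_succ, cast_succ]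
    have e1 : d + (r + 1) = d + r + 1 := by omega
    have e2 : l2 + (r + 1) = l2 + r + 1 := by omega
    rw [e1, e2]

lemma freeC (H : Ctx n l1 l2 d) :
    FreeState n l1 l2 d (((d : ℕ) : ZMod n), ((l2 : ℕ) : ZMod n)) := by
  obtain ⟨hd, hl1, h12, h2d, hn2, h3⟩ := id H
  have hn : 0 < n := by omega
  apply free_of_cycle hn
  · rw [orbitC H n le_rfl]
    have e1 : ((d + n : ℕ) : ZMod n) = ((d : ℕ) : ZMod n) := by push_cast [ZMod.natCast_self]; ring
    have e2 : ((l2 + n : ℕ) : ZMod n) = ((l2 : ℕ) : ZMod n) := by push_cast [ZMod.natCast_self]; ring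
    rw [e1, e2]
  · intro r hr
    rw [orbitC H r (by omega)]
    exact notblockedC H hr

lemma notblockedD (H : Ctx n l1 l2 d) {r : ℕ} (hr : r < n) :
    ¬ blocked1 n l1 l2 d (((l1 + r : ℕ) : ZMod n), ((d + r : ℕ) : ZMod n)) ∧
    ¬ blocked2 n l1 l2 d (((l1 + r : ℕ) : ZMod n), ((d + r : ℕ) : ZMod n)) := by
  obtain ⟨hd, hl1, h12, h2d, hn2, h3⟩ := id H
  rcases lt_or_ge (d + r) n with hc1 | hc1
  · have hc2 : l1 + r < n := by omega
    constructor
    · rw [blocked1_nat H (by omega) (by omega)]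
      rintro (⟨e1, i, hi, e2⟩ | ⟨e1, e2, e3⟩) <;> omega
    · rw [blocked2_nat H (by omega) (by omega)]
      rintro (⟨e1, i, hi, e2⟩ | ⟨e1, e2, e3⟩) <;> omega
  · rw [cast_sub_n (x := d + r) hc1]
    rcases lt_or_ge (l1 + r) n with hc2 | hc2
    · constructor
      · rw [blocked1_nat H (by omega) (by omega)]
        rintro (⟨e1, i, hi, e2⟩ | ⟨e1, e2, e3⟩) <;> omega
      · rw [blocked2_nat H (by omega) (by omega)]
        rintro (⟨e1, i, hi, e2⟩ | ⟨e1, e2, e3⟩) <;> omega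
    · rw [cast_sub_n (x := l1 + r) hc2]
      constructor
      · rw [blocked1_nat H (by omega) (by omega)]
        rintro (⟨e1, i, hi, e2⟩ | ⟨e1, e2, e3⟩) <;> omega
      · rw [blocked2_nat H (by omega) (by omega)]
        rintro (⟨e1, i, hi, e2⟩ | ⟨e1, e2, e3⟩) <;> omega

lemma orbitD (H : Ctx n l1 l2 d) : ∀ r : ℕ, r ≤ n →
    (step n l1 l2 d)^[r] (((l1 : ℕ) : ZMod n), ((d : ℕ) : ZMod n)) =
      (((l1 + r : ℕ) : ZMod n), ((d + r : ℕ) : ZMod n)) := by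
  intro r
  induction r with
  | zero => intro _; simp
  | succ r ih =>
    intro hr
    rw [Function.iterate_succ_apply', ih (by omega)]
    obtain ⟨hb1, hb2⟩ := notblockedD H (r := r) (by omega)
    rw [step_move12 _ _ hb1 hb2, cast_succ, cast_succ]
    have e1 : l1 + (r + 1) = l1 + r + 1 := by omega
    have e2 : d + (r + 1) = d + r + 1 := by omega
    rw [e1, e2]

lemma freeD (H : Ctx n l1 l2 d) :
    FreeState n l1 l2 d (((l1 : ℕ) : ZMod n), ((d : ℕ) : ZMod n)) := by
  obtain ⟨hd, hl1, h12, h2d, hn2, h3⟩ := id H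
  have hn : 0 < n := by omega
  apply free_of_cycle hn
  · rw [orbitD H n le_rfl]
    have e1 : ((l1 + n : ℕ) : ZMod n) = ((l1 : ℕ) : ZMod n) := by push_cast [ZMod.natCast_self]; ring
    have e2 : ((d + n : ℕ) : ZMod n) = ((d : ℕ) : ZMod n) := by push_cast [ZMod.natCast_self]; ring
    rw [e1, e2]
  · intro r hr
    rw [orbitD H r (by omega)]
    exact notblockedD H hr

end Dyn

section Orbit

variable {n l1 l2 d : ℕ}

/-- First coordinate (reduced representative) of the canonical non-free orbit at time `t`. -/
def orbA (n l1 l2 d t : ℕ) : ℕ :=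
  if t < n - d - l1 then d + l1 + t else if t ≤ d + l2 then 0 else t - (d + l2)

/-- Second coordinate (reduced representative) of the canonical non-free orbit at time `t`. -/
def orbB (n t : ℕ) : ℕ := if t < n then t else 0

lemma orbA_lt (H : Ctx n l1 l2 d) {t : ℕ} (ht : t ≤ l1 + l2 + 2 * d) : orbA n l1 l2 d t < n := by
  obtain ⟨hd, hl1, h12, h2d, hn2, h3⟩ := id H
  unfold orbA
  split
  · omega
  · split <;> omega

lemma orbB_lt (H : Ctx n l1 l2 d) {t : ℕ} : orbB n t < n := by
  obtain ⟨hd, hl1, h12, h2d, hn2, h3⟩ := id H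
  unfold orbB
  split <;> omega

/-- Blockedness along the canonical orbit, and the step relation. -/
lemma orbit_step (H : Ctx n l1 l2 d) {t : ℕ} (ht : t < l1 + l2 + 2 * d) :
    (blocked1 n l1 l2 d (((orbA n l1 l2 d t : ℕ) : ZMod n), ((orbB n t : ℕ) : ZMod n)) ↔
      (n - d - l1 ≤ t ∧ t < d + l2)) ∧
    (blocked2 n l1 l2 d (((orbA n l1 l2 d t : ℕ) : ZMod n), ((orbB n t : ℕ) : ZMod n)) ↔
      n ≤ t) ∧
    step n l1 l2 d (((orbA n l1 l2 d t : ℕ) : ZMod n), ((orbB n t : ℕ) : ZMod n)) =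
      (((orbA n l1 l2 d (t + 1) : ℕ) : ZMod n), ((orbB n (t + 1) : ℕ) : ZMod n)) := by
  obtain ⟨hd, hl1, h12, h2d, hn2, h3⟩ := id H
  rcases lt_or_ge t (n - d - l1) with hp1 | hp1
  · -- Phase 1 : both move freely
    have hA : orbA n l1 l2 d t = d + l1 + t := by unfold orbA; rw [if_pos hp1]
    have hB : orbB n t = t := by unfold orbB; rw [if_pos (by omega)]
    rw [hA, hB]
    have hb1 : ¬ blocked1 n l1 l2 d (((d + l1 + t : ℕ) : ZMod n), ((t : ℕ) : ZMod n)) := by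
      rw [blocked1_nat H (by omega) (by omega)]
      rintro (⟨e1, i, hi, e2⟩ | ⟨e1, e2, e3⟩) <;> omega
    have hb2 : ¬ blocked2 n l1 l2 d (((d + l1 + t : ℕ) : ZMod n), ((t : ℕ) : ZMod n)) := by
      rw [blocked2_nat H (by omega) (by omega)]
      rintro (⟨e1, i, hi, e2⟩ | ⟨e1, e2, e3⟩) <;> omega
    refine ⟨iff_of_false hb1 (by omega), iff_of_false hb2 (by omega), ?_⟩
    rw [step_move12 _ _ hb1 hb2, cast_succ, cast_succ]
    rcases lt_or_ge (t + 1) (n - d - l1) with hq | hq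
    · have hA' : orbA n l1 l2 d (t + 1) = d + l1 + (t + 1) := by unfold orbA; rw [if_pos hq]
      have hB' : orbB n (t + 1) = t + 1 := by unfold orbB; rw [if_pos (by omega)]
      rw [hA', hB', show d + l1 + (t + 1) = d + l1 + t + 1 from by omega]
    · -- t + 1 = n - d - l1 : the first cluster arrives at cell 0
      have he : d + l1 + t + 1 = n := by omega
      have hA' : orbA n l1 l2 d (t + 1) = 0 := by
        unfold orbA; rw [if_neg (by omega), if_pos (by omega)]
      have hB' : orbB n (t + 1) = t + 1 := by unfold orbB; rw [if_pos (by omega)]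
      rw [hA', hB', he, ZMod.natCast_self, Nat.cast_zero]
  · rcases lt_or_ge t (d + l2) with hp2 | hp2
    · -- Phase 2 : cluster 1 waits at cell 0
      have hA : orbA n l1 l2 d t = 0 := by unfold orbA; rw [if_neg (by omega), if_pos (by omega)]
      have hB : orbB n t = t := by unfold orbB; rw [if_pos (by omega)]
      rw [hA, hB]
      have hb1 : blocked1 n l1 l2 d (((0 : ℕ) : ZMod n), ((t : ℕ) : ZMod n)) := by
        rw [blocked1_nat H (by omega) (by omega)]
        exact Or.inl ⟨rfl, t - d, by omega, by omega⟩
      have hb2 : ¬ blocked2 n l1 l2 d (((0 : ℕ) : ZMod n), ((t : ℕ) : ZMod n)) := by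
        rw [blocked2_nat H (by omega) (by omega)]
        rintro (⟨e1, i, hi, e2⟩ | ⟨e1, e2, e3⟩) <;> omega
      refine ⟨iff_of_true hb1 (by omega), iff_of_false hb2 (by omega), ?_⟩
      rw [step_move2 _ _ hb1 hb2, cast_succ]
      have hA' : orbA n l1 l2 d (t + 1) = 0 := by
        unfold orbA; rw [if_neg (by omega), if_pos (by omega)]
      have hB' : orbB n (t + 1) = t + 1 := by unfold orbB; rw [if_pos (by omega)]
      rw [hA', hB']
    · rcases lt_or_ge t n with hp3 | hp3
      · -- Phase 3 : both move freely
        have hA : orbA n l1 l2 d t = t - (d + l2) := by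
          rcases eq_or_lt_of_le hp2 with he | he
          · unfold orbA; rw [if_neg (by omega), if_pos (by omega)]; omega
          · unfold orbA; rw [if_neg (by omega), if_neg (by omega)]
        have hB : orbB n t = t := by unfold orbB; rw [if_pos hp3]
        rw [hA, hB]
        have hb1 : ¬ blocked1 n l1 l2 d (((t - (d + l2) : ℕ) : ZMod n), ((t : ℕ) : ZMod n)) := by
          rw [blocked1_nat H (by omega) (by omega)]
          rintro (⟨e1, i, hi, e2⟩ | ⟨e1, e2, e3⟩) <;> omega
        have hb2 : ¬ blocked2 n l1 l2 d (((t - (d + l2) : ℕ) : ZMod n), ((t : ℕ) : ZMod n)) := by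
          rw [blocked2_nat H (by omega) (by omega)]
          rintro (⟨e1, i, hi, e2⟩ | ⟨e1, e2, e3⟩) <;> omega
        refine ⟨iff_of_false hb1 (by omega), iff_of_false hb2 (by omega), ?_⟩
        rw [step_move12 _ _ hb1 hb2, cast_succ, cast_succ]
        have hA' : orbA n l1 l2 d (t + 1) = t + 1 - (d + l2) := by
          unfold orbA; rw [if_neg (by omega), if_neg (by omega)]
        rw [hA', show t + 1 - (d + l2) = t - (d + l2) + 1 from by omega]
        rcases lt_or_ge (t + 1) n with hq | hq
        · have hB' : orbB n (t + 1) = t + 1 := by unfold orbB; rw [if_pos hq]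
          rw [hB']
        · have he : t + 1 = n := by omega
          have hB' : orbB n (t + 1) = 0 := by unfold orbB; rw [if_neg (by omega)]
          rw [hB', he, ZMod.natCast_self, Nat.cast_zero]
      · -- Phase 4 : cluster 2 waits at cell 0
        have hA : orbA n l1 l2 d t = t - (d + l2) := by
          unfold orbA; rw [if_neg (by omega), if_neg (by omega)]
        have hB : orbB n t = 0 := by unfold orbB; rw [if_neg (by omega)]
        rw [hA, hB]
        have hb1 : ¬ blocked1 n l1 l2 d (((t - (d + l2) : ℕ) : ZMod n), ((0 : ℕ) : ZMod n)) := by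
          rw [blocked1_nat H (by omega) (by omega)]
          rintro (⟨e1, i, hi, e2⟩ | ⟨e1, e2, e3⟩) <;> omega
        have hb2 : blocked2 n l1 l2 d (((t - (d + l2) : ℕ) : ZMod n), ((0 : ℕ) : ZMod n)) := by
          rw [blocked2_nat H (by omega) (by omega)]
          exact Or.inl ⟨rfl, t - (2 * d + l2), by omega, by omega⟩
        refine ⟨iff_of_false hb1 (by omega), iff_of_true hb2 (by omega), ?_⟩
        rw [step_move1 _ _ hb1 hb2, cast_succ]
        have hA' : orbA n l1 l2 d (t + 1) = t + 1 - (d + l2) := by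
          unfold orbA; rw [if_neg (by omega), if_neg (by omega)]
        have hB' : orbB n (t + 1) = 0 := by unfold orbB; rw [if_neg (by omega)]
        rw [hA', hB', show t + 1 - (d + l2) = t - (d + l2) + 1 from by omega]

/-- The canonical orbit through `(d+l1, 0)`. -/
lemma orbit_q0 (H : Ctx n l1 l2 d) : ∀ t : ℕ, t ≤ l1 + l2 + 2 * d →
    (step n l1 l2 d)^[t] (((d + l1 : ℕ) : ZMod n), ((0 : ℕ) : ZMod n)) =
      (((orbA n l1 l2 d t : ℕ) : ZMod n), ((orbB n t : ℕ) : ZMod n)) := by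
  obtain ⟨hd, hl1, h12, h2d, hn2, h3⟩ := id H
  intro t
  induction t with
  | zero =>
    intro _
    have hA : orbA n l1 l2 d 0 = d + l1 := by
      unfold orbA; rw [if_pos (by omega)]; omega
    have hB : orbB n 0 = 0 := by unfold orbB; rw [if_pos (by omega)]
    rw [Function.iterate_zero_apply, hA, hB]
  | succ t ih =>
    intro ht
    rw [Function.iterate_succ_apply', ih (by omega), (orbit_step H (by omega)).2.2]

lemma periodic_q0 (H : Ctx n l1 l2 d) :
    (step n l1 l2 d)^[l1 + l2 + 2 * d] (((d + l1 : ℕ) : ZMod n), ((0 : ℕ) : ZMod n)) =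
      (((d + l1 : ℕ) : ZMod n), ((0 : ℕ) : ZMod n)) := by
  obtain ⟨hd, hl1, h12, h2d, hn2, h3⟩ := id H
  rw [orbit_q0 H _ le_rfl]
  have hA : orbA n l1 l2 d (l1 + l2 + 2 * d) = d + l1 := by
    unfold orbA; rw [if_neg (by omega), if_neg (by omega)]; omega
  have hB : orbB n (l1 + l2 + 2 * d) = 0 := by unfold orbB; rw [if_neg (by omega)]
  rw [hA, hB]

lemma moves1_q0 (H : Ctx n l1 l2 d) :
    moves1 n l1 l2 d (((d + l1 : ℕ) : ZMod n), ((0 : ℕ) : ZMod n)) (l1 + l2 + 2 * d) = n := by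
  obtain ⟨hd, hl1, h12, h2d, hn2, h3⟩ := id H
  unfold moves1
  have hcongr : (Finset.range (l1 + l2 + 2 * d)).filter
      (fun t => ¬ blocked1 n l1 l2 d ((step n l1 l2 d)^[t]
        (((d + l1 : ℕ) : ZMod n), ((0 : ℕ) : ZMod n)))) =
      (Finset.range (l1 + l2 + 2 * d)).filter
        (fun t => ¬ (n - d - l1 ≤ t ∧ t < d + l2)) := by
    apply Finset.filter_congr
    intro t ht
    rw [Finset.mem_range] at ht
    rw [orbit_q0 H t (by omega)]
    rw [(orbit_step H ht).1]
  rw [hcongr]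
  have hset : (Finset.range (l1 + l2 + 2 * d)).filter
      (fun t => ¬ (n - d - l1 ≤ t ∧ t < d + l2)) =
      Finset.range (l1 + l2 + 2 * d) \ Finset.Ico (n - d - l1) (d + l2) := by
    ext t
    simp only [Finset.mem_filter, Finset.mem_sdiff, Finset.mem_range, Finset.mem_Ico]
  rw [hset, Finset.card_sdiff_of_subset (by
    intro t ht
    rw [Finset.mem_Ico] at ht
    rw [Finset.mem_range]
    omega)]
  rw [Nat.card_Ico, Finset.card_range]
  omega

lemma moves2_q0 (H : Ctx n l1 l2 d) :
    moves2 n l1 l2 d (((d + l1 : ℕ) : ZMod n), ((0 : ℕ) : ZMod n)) (l1 + l2 + 2 * d) = n := by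
  obtain ⟨hd, hl1, h12, h2d, hn2, h3⟩ := id H
  unfold moves2
  have hcongr : (Finset.range (l1 + l2 + 2 * d)).filter
      (fun t => ¬ blocked2 n l1 l2 d ((step n l1 l2 d)^[t]
        (((d + l1 : ℕ) : ZMod n), ((0 : ℕ) : ZMod n)))) =
      (Finset.range (l1 + l2 + 2 * d)).filter (fun t => ¬ n ≤ t) := by
    apply Finset.filter_congr
    intro t ht
    rw [Finset.mem_range] at ht
    rw [orbit_q0 H t (by omega)]
    rw [(orbit_step H ht).2.1]
  rw [hcongr]
  have hset : (Finset.range (l1 + l2 + 2 * d)).filter (fun t => ¬ n ≤ t) = Finset.range n := by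
    ext t
    simp only [Finset.mem_filter, Finset.mem_range]
    omega
  rw [hset, Finset.card_range]

end Orbit

theorem stmt5 (n l1 l2 d : ℕ) (hn : 0 < n) (hd : 0 < d) (h2d : 2 * d ≤ n)
    (hl1pos : 0 < l1) (hl1n : l1 < n) (hl2pos : 0 < l2) (hl2n : l2 < n) (h12 : l1 ≤ l2)
    (h1 : l2 ≤ d) (h2 : l2 ≤ n - 2 * d) (h3 : l1 + l2 > n - 2 * d) :
    ∀ s : State n, Admissible n l1 l2 d s →
      (∃ t0 : ℕ, FreeState n l1 l2 d ((step n l1 l2 d)^[t0] s)) ∨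
      (∃ t0 T : ℕ, Periodic n l1 l2 d ((step n l1 l2 d)^[t0] s) T ∧
        moves1 n l1 l2 d ((step n l1 l2 d)^[t0] s) T * (l1 + l2 + 2 * d) = n * T ∧
        moves2 n l1 l2 d ((step n l1 l2 d)^[t0] s) T * (l1 + l2 + 2 * d) = n * T) := by
  have H : Ctx n l1 l2 d := ⟨hd, hl1pos, h12, h1, by omega, by omega⟩
  haveI : NeZero n := ⟨by omega⟩
  intro s _hadm
  by_cases hfree : ∀ t : ℕ, ¬ blocked1 n l1 l2 d ((step n l1 l2 d)^[t] s) ∧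
      ¬ blocked2 n l1 l2 d ((step n l1 l2 d)^[t] s)
  · left
    refine ⟨0, ?_⟩
    rw [Function.iterate_zero_apply]
    exact hfree
  · obtain ⟨t, ht⟩ := not_forall.mp hfree
    have hbor : blocked1 n l1 l2 d ((step n l1 l2 d)^[t] s) ∨
        blocked2 n l1 l2 d ((step n l1 l2 d)^[t] s) := by
      by_contra hcon
      exact ht (not_or.mp hcon)
    obtain ⟨x, hxlt, hxe⟩ : ∃ x : ℕ, x < n ∧ ((x : ZMod n)) = ((step n l1 l2 d)^[t] s).1 :=
      ⟨((step n l1 l2 d)^[t] s).1.val, ZMod.val_lt _, ZMod.natCast_rightInverse _⟩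
    obtain ⟨y, hylt, hye⟩ : ∃ y : ℕ, y < n ∧ ((y : ZMod n)) = ((step n l1 l2 d)^[t] s).2 :=
      ⟨((step n l1 l2 d)^[t] s).2.val, ZMod.val_lt _, ZMod.natCast_rightInverse _⟩
    have hrep : (step n l1 l2 d)^[t] s = (((x : ℕ) : ZMod n), ((y : ℕ) : ZMod n)) := by
      rw [hxe, hye]
    rw [hrep] at hbor
    rcases hbor with hb | hb
    · rw [blocked1_nat H hxlt hylt] at hb
      rcases hb with ⟨hx0, j, hj, hyj⟩ | ⟨hxd, hy1, hy2⟩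
      · -- cluster 1 is blocked at a node : the system reaches the canonical cycle
        right
        rw [hx0, hyj] at hrep
        have hstep1 : (step n l1 l2 d)^[l2 - j] ((step n l1 l2 d)^[t] s) =
            (((0 : ℕ) : ZMod n), ((d + l2 : ℕ) : ZMod n)) := by
          rw [hrep]; exact funnelB1 H (l2 - j) j (by omega)
        have hstep2 : (step n l1 l2 d)^[n - d - l2]
            ((((0 : ℕ) : ZMod n), ((d + l2 : ℕ) : ZMod n)) : State n) =
            (((d + (n - 2 * d - l2) : ℕ) : ZMod n), ((0 : ℕ) : ZMod n)) := by
          have := funnelB2 H (n - d - l2) le_rfl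
          rw [this, show d + l2 + (n - d - l2) = n from by
            obtain ⟨_, _, _, _, hn2, _⟩ := id H; omega, ZMod.natCast_self,
            show d + (n - 2 * d - l2) = n - d - l2 from by
              obtain ⟨_, _, _, _, hn2, _⟩ := id H; omega]
          norm_num
        have hstep3 : (step n l1 l2 d)^[l1 - (n - 2 * d - l2)]
            ((((d + (n - 2 * d - l2) : ℕ) : ZMod n), ((0 : ℕ) : ZMod n)) : State n) =
            (((d + l1 : ℕ) : ZMod n), ((0 : ℕ) : ZMod n)) := by
          have h3' : n - 2 * d - l2 < l1 := by
            obtain ⟨_, _, _, _, _, h3''⟩ := id H; omega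
          exact funnelA H (l1 - (n - 2 * d - l2)) (n - 2 * d - l2) (by omega)
        have h0 : (step n l1 l2 d)^[(l1 - (n - 2 * d - l2)) + ((n - d - l2) + ((l2 - j) + t))] s =
            (((d + l1 : ℕ) : ZMod n), ((0 : ℕ) : ZMod n)) := by
          rw [Function.iterate_add_apply, Function.iterate_add_apply,
            Function.iterate_add_apply, hstep1, hstep2, hstep3]
        refine ⟨(l1 - (n - 2 * d - l2)) + ((n - d - l2) + ((l2 - j) + t)),
          l1 + l2 + 2 * d, ?_, ?_, ?_⟩ <;> rw [h0]
        · exact ⟨by omega, periodic_q0 H⟩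
        · rw [moves1_q0 H]
        · rw [moves2_q0 H]
      · -- cluster 1 is blocked by competition : the system reaches free motion
        left
        rw [hxd] at hrep
        refine ⟨(l2 - y) + t, ?_⟩
        rw [Function.iterate_add_apply, hrep, funnelC H (l2 - y) y hy1 (by omega)]
        exact freeC H
    · rw [blocked2_nat H hxlt hylt] at hb
      rcases hb with ⟨hy0, j, hj, hxj⟩ | ⟨hyd, hx1, hx2⟩
      · -- cluster 2 is blocked at a node : the system reaches the canonical cycle
        right
        rw [hy0, hxj] at hrep
        have h0 : (step n l1 l2 d)^[(l1 - j) + t] s =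
            (((d + l1 : ℕ) : ZMod n), ((0 : ℕ) : ZMod n)) := by
          rw [Function.iterate_add_apply, hrep]
          exact funnelA H (l1 - j) j (by omega)
        refine ⟨(l1 - j) + t, l1 + l2 + 2 * d, ?_, ?_, ?_⟩ <;> rw [h0]
        · exact ⟨by omega, periodic_q0 H⟩
        · rw [moves1_q0 H]
        · rw [moves2_q0 H]
      · -- cluster 2 is blocked by competition : the system reaches free motion
        left
        rw [hyd] at hrep
        refine ⟨(l1 - x) + t, ?_⟩
        rw [Function.iterate_add_apply, hrep, funnelD H (l1 - x) x hx1 (by omega)]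
        exact freeD H

end TwoContour
end

section
/- If l₂ ≤ d, l₁ ≤ n − 2d, and l₂ > n − 2d, then the two-contour system enters a state of free motion from every admissible initial state. -/
open scoped Classical

namespace ZMod

lemma natCast_eq_natCast_cases {n x y : ℕ} (hx : x < 2 * n) (hy : y < 2 * n)
    (h : (x : ZMod n) = y) : x = y ∨ x = y + n ∨ y = x + n := by
  rw [natCast_eq_natCast_iff'] at h
  have hx' := Nat.mod_add_div x n
  have hy' := Nat.mod_add_div y n
  have hqx : x / n < 2 := Nat.div_lt_of_lt_mul (by linarith)
  have hqy : y / n < 2 := Nat.div_lt_of_lt_mul (by linarith)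
  interval_cases x / n <;> interval_cases y / n <;> omega

lemma natCast_inj_of_lt {n x y : ℕ} (hx : x < n) (hy : y < n) :
    (x : ZMod n) = y ↔ x = y := by
  refine ⟨fun h => ?_, congrArg _⟩
  have := natCast_eq_natCast_cases (by omega) (by omega) h
  omega

lemma exists_natCast_eq {n : ℕ} (hn : 0 < n) (a : ZMod n) : ∃ x < n, (x : ZMod n) = a :=
  haveI : NeZero n := ⟨hn.ne'⟩
  ⟨a.val, a.val_lt, a.natCast_zmod_val⟩

end ZMod

namespace TwoContour

open Function

-- The disjunct `y + n < c + l` is the part of the cluster that wraps around past cell `0`.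
lemma occ_natCast_iff {n l c y : ℕ} (hl : l ≤ n) (hc : c ≤ n) (hy : y < n) :
    occ n y l c ↔ (c ≤ y ∧ y < c + l) ∨ y + n < c + l := by
  have key (k : ℕ) : (c : ZMod n) = y - k ↔ ((c + k : ℕ) : ZMod n) = y := by
    push_cast; exact eq_sub_iff_add_eq
  simp only [occ, key]
  constructor
  · rintro ⟨k, hk, h⟩
    have := ZMod.natCast_eq_natCast_cases (by omega) (by omega) h
    omega
  · rintro (⟨hcy, hyl⟩ | hyl)
    · exact ⟨y - c, by omega, by rw [Nat.add_sub_cancel' hcy]⟩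
    · refine ⟨y + n - c, by omega, ?_⟩
      rw [show c + (y + n - c) = y + n by omega]
      simp

lemma blocked1_natCast_iff {n l1 l2 d x y : ℕ} (hl2 : 0 < l2) (hdl2 : d + l2 ≤ n)
    (hx : x < n) (hy : y < n) :
    blocked1 n l1 l2 d (x, y) ↔ (x = 0 ∧ d ≤ y ∧ y < d + l2) ∨ (x = d ∧ 0 < y ∧ y < l2) := by
  have hx0 : (x : ZMod n) = 0 ↔ x = 0 := by
    exact_mod_cast ZMod.natCast_inj_of_lt hx (show 0 < n by omega)
  have hxd : (x : ZMod n) = d ↔ x = d := ZMod.natCast_inj_of_lt hx (by omega)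
  have hyd : (y : ZMod n) = d ↔ y = d := ZMod.natCast_inj_of_lt hy (by omega)
  have hocc (c : ℕ) (hc : c ≤ n) := occ_natCast_iff (l := l2) (by omega) hc hy
  have hocc0 := hocc 0 (by omega)
  have hocc1 := hocc 1 (by omega)
  have hoccd := hocc d (by omega)
  have hoccd1 := hocc (d + 1) (by omega)
  push_cast at hocc0 hocc1 hoccd1
  simp only [blocked1, hx0, hxd, hyd, hoccd, hocc0, hocc1, hoccd1]
  omega

section Symmetry

variable {n l1 l2 d : ℕ}

-- `blocked2` is definitionally `blocked1` with the two contours exchanged.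
lemma blocked2_natCast_iff {x y : ℕ} (hl1 : 0 < l1) (hdl1 : d + l1 ≤ n)
    (hx : x < n) (hy : y < n) :
    blocked2 n l1 l2 d (x, y) ↔ (y = 0 ∧ d ≤ x ∧ x < d + l1) ∨ (y = d ∧ 0 < x ∧ x < l1) :=
  blocked1_natCast_iff (l1 := l2) hl1 hdl1 hy hx

lemma swap_step (s : State n) : (step n l1 l2 d s).swap = step n l2 l1 d s.swap := rfl

lemma swap_iterate_step (m : ℕ) (s : State n) :
    ((step n l1 l2 d)^[m] s).swap = (step n l2 l1 d)^[m] s.swap :=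
  Semiconj.iterate_right (f := Prod.swap) swap_step m s

lemma FreeState.swap {s : State n} (h : FreeState n l1 l2 d s) :
    FreeState n l2 l1 d s.swap := fun t => by
  rw [← swap_iterate_step]
  exact (h t).symm

end Symmetry

section Dynamics

variable {n l1 l2 d : ℕ}

def EventuallyFree (n l1 l2 d : ℕ) (s : State n) : Prop :=
  ∃ t : ℕ, FreeState n l1 l2 d ((step n l1 l2 d)^[t] s)

lemma EventuallyFree.of_iterate_eq {s s' : State n} {m : ℕ} (h : (step n l1 l2 d)^[m] s = s')
    (hs' : EventuallyFree n l1 l2 d s') : EventuallyFree n l1 l2 d s := by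
  obtain ⟨t, ht⟩ := hs'
  exact ⟨t + m, by rwa [iterate_add_apply, h]⟩

lemma EventuallyFree.swap {s : State n} (h : EventuallyFree n l1 l2 d s) :
    EventuallyFree n l2 l1 d s.swap := by
  obtain ⟨t, ht⟩ := h
  exact ⟨t, by rw [← swap_iterate_step]; exact ht.swap⟩

lemma step_of_not_blocked {s : State n} (h1 : ¬ blocked1 n l1 l2 d s)
    (h2 : ¬ blocked2 n l1 l2 d s) : step n l1 l2 d s = (s.1 + 1, s.2 + 1) := by
  simp [step, h1, h2]

-- Free motion keeps `s.2 - s.1` constant, so it never meets a state of another difference.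
lemma freeState_of_forall_sub_eq {s : State n}
    (h : ∀ s' : State n, s'.2 - s'.1 = s.2 - s.1 →
      ¬ blocked1 n l1 l2 d s' ∧ ¬ blocked2 n l1 l2 d s') :
    FreeState n l1 l2 d s := by
  have hsub (t : ℕ) : ((step n l1 l2 d)^[t] s).2 - ((step n l1 l2 d)^[t] s).1 = s.2 - s.1 := by
    induction t with
    | zero => rfl
    | succ t ih =>
      obtain ⟨h1, h2⟩ := h _ ih
      rw [iterate_succ_apply', step_of_not_blocked h1 h2, ← ih]
      exact add_sub_add_right_eq_sub _ _ _
  exact fun t => h _ (hsub t)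

lemma iterate_step_of_forall_not_blocked {a b m : ℕ}
    (h : ∀ j < m, ¬ blocked1 n l1 l2 d ((a + j : ℕ), (b + j : ℕ)) ∧
      ¬ blocked2 n l1 l2 d ((a + j : ℕ), (b + j : ℕ))) :
    (step n l1 l2 d)^[m] (a, b) = ((↑(a + m), ↑(b + m)) : State n) := by
  induction m with
  | zero => simp
  | succ m ih =>
    obtain ⟨h1, h2⟩ := h m (by omega)
    rw [iterate_succ_apply', ih fun j hj => h j (by omega), step_of_not_blocked h1 h2]
    push_cast
    ring_nf

lemma iterate_step_of_forall_blocked1 (a : ZMod n) {b m : ℕ}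
    (h : ∀ j < m, blocked1 n l1 l2 d (a, (b + j : ℕ)) ∧ ¬ blocked2 n l1 l2 d (a, (b + j : ℕ))) :
    (step n l1 l2 d)^[m] (a, b) = ((a, ↑(b + m)) : State n) := by
  induction m with
  | zero => simp
  | succ m ih =>
    obtain ⟨h1, h2⟩ := h m (by omega)
    rw [iterate_succ_apply', ih fun j hj => h j (by omega)]
    simp only [step, h1, h2, if_true, if_false]
    push_cast
    ring_nf

lemma eventuallyFree_of_forall_blocked
    (h : ∀ s : State n, blocked1 n l1 l2 d s ∨ blocked2 n l1 l2 d s → EventuallyFree n l1 l2 d s)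
    (s : State n) : EventuallyFree n l1 l2 d s := by
  by_cases hfree : FreeState n l1 l2 d s
  · exact ⟨0, hfree⟩
  obtain ⟨t, ht⟩ : ∃ t, blocked1 n l1 l2 d ((step n l1 l2 d)^[t] s) ∨
      blocked2 n l1 l2 d ((step n l1 l2 d)^[t] s) := by
    simpa only [FreeState, not_forall, not_and_or, not_not] using hfree
  exact .of_iterate_eq rfl (h _ ht)

end Dynamics

structure ShortClusters (n l1 l2 d : ℕ) : Prop where
  l1_pos : 0 < l1
  l2_pos : 0 < l2
  l1_le : l1 ≤ d
  l2_le : l2 ≤ d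
  two_mul_le : 2 * d ≤ n

lemma ShortClusters.swap {n l1 l2 d : ℕ} (hc : ShortClusters n l1 l2 d) :
    ShortClusters n l2 l1 d :=
  ⟨hc.l2_pos, hc.l1_pos, hc.l2_le, hc.l1_le, hc.two_mul_le⟩

section ShortClusters

variable {n l1 l2 d : ℕ}

lemma freeState_d_l2 (hc : ShortClusters n l1 l2 d) : FreeState n l1 l2 d (d, l2) := by
  have ⟨hl1, hl2, hl1d, hl2d, hdn⟩ := hc
  refine freeState_of_forall_sub_eq fun ⟨a, b⟩ hs => ?_
  obtain ⟨x, hx, rfl⟩ := ZMod.exists_natCast_eq (by omega) a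
  obtain ⟨y, hy, rfl⟩ := ZMod.exists_natCast_eq (by omega) b
  have hxy : ((y + d : ℕ) : ZMod n) = (x + l2 : ℕ) := by
    push_cast
    linear_combination hs
  have := ZMod.natCast_eq_natCast_cases (by omega) (by omega) hxy
  rw [blocked1_natCast_iff hl2 (by omega) hx hy, blocked2_natCast_iff hl1 (by omega) hx hy]
  omega

lemma eventuallyFree_d_y (hc : ShortClusters n l1 l2 d) {y : ℕ} (hy0 : 0 < y) (hy : y ≤ l2) :
    EventuallyFree n l1 l2 d (d, y) := by
  have ⟨hl1, hl2, hl1d, hl2d, hdn⟩ := hc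
  refine .of_iterate_eq (m := l2 - y) (iterate_step_of_forall_blocked1 _ fun j hj => ?_) ⟨0, ?_⟩
  · rw [blocked1_natCast_iff hl2 (by omega) (by omega) (by omega),
      blocked2_natCast_iff hl1 (by omega) (by omega) (by omega)]
    omega
  · rw [Nat.add_sub_cancel' hy]
    exact freeState_d_l2 hc

lemma eventuallyFree_x_d (hc : ShortClusters n l1 l2 d) {x : ℕ} (hx0 : 0 < x) (hx : x ≤ l1) :
    EventuallyFree n l1 l2 d (x, d) :=
  (eventuallyFree_d_y hc.swap hx0 hx).swap

lemma iterate_step_zero_y (hc : ShortClusters n l1 l2 d) {y : ℕ} (hdy : d ≤ y) (hy : y ≤ d + l2) :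
    (step n l1 l2 d)^[d + l2 - y] ((0 : ℕ), y) = (((0 : ℕ), (d + l2 : ℕ)) : State n) := by
  have ⟨hl1, hl2, hl1d, hl2d, hdn⟩ := hc
  rw [iterate_step_of_forall_blocked1 _ fun j hj => ?_, Nat.add_sub_cancel' hy]
  rw [blocked1_natCast_iff hl2 (by omega) (by omega) (by omega),
    blocked2_natCast_iff hl1 (by omega) (by omega) (by omega)]
  omega

lemma eventuallyFree_zero_y (hc : ShortClusters n l1 l2 d) (hl2n : n < l2 + 2 * d) {y : ℕ}
    (hdy : d ≤ y) (hy : y ≤ d + l2) : EventuallyFree n l1 l2 d ((0 : ℕ), y) := by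
  have ⟨hl1, hl2, hl1d, hl2d, hdn⟩ := hc
  refine .of_iterate_eq (iterate_step_zero_y hc hdy hy) ?_
  -- `d` free steps, split where the front of cluster 2 passes cell `0`
  refine .of_iterate_eq (m := n - d - l2)
    (iterate_step_of_forall_not_blocked fun j hj => ?_) ?_
  · rw [blocked1_natCast_iff hl2 (by omega) (by omega) (by omega),
      blocked2_natCast_iff hl1 (by omega) (by omega) (by omega)]
    omega
  rw [show d + l2 + (n - d - l2) = n by omega, ZMod.natCast_self, zero_add,
    ← Nat.cast_zero (R := ZMod n)]
  refine .of_iterate_eq (m := 2 * d + l2 - n)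
    (iterate_step_of_forall_not_blocked fun j hj => ?_) ?_
  · rw [blocked1_natCast_iff hl2 (by omega) (by omega) (by omega),
      blocked2_natCast_iff hl1 (by omega) (by omega) (by omega)]
    omega
  rw [show n - d - l2 + (2 * d + l2 - n) = d by omega, zero_add]
  exact eventuallyFree_d_y hc (by omega) (by omega)

lemma eventuallyFree_x_zero (hc : ShortClusters n l1 l2 d) (hl1n : l1 + 2 * d ≤ n)
    (hl2n : n < l2 + 2 * d) {x : ℕ} (hdx : d ≤ x) (hx : x ≤ d + l1) :
    EventuallyFree n l1 l2 d (x, (0 : ℕ)) := by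
  have ⟨hl1, hl2, hl1d, hl2d, hdn⟩ := hc
  have hwait := congrArg Prod.swap (iterate_step_zero_y hc.swap hdx hx)
  rw [swap_iterate_step] at hwait
  refine .of_iterate_eq hwait ?_
  refine .of_iterate_eq (m := n - d - l1)
    (iterate_step_of_forall_not_blocked fun j hj => ?_) ?_
  · rw [blocked1_natCast_iff hl2 (by omega) (by omega) (by omega),
      blocked2_natCast_iff hl1 (by omega) (by omega) (by omega)]
    omega
  rw [show d + l1 + (n - d - l1) = n by omega, ZMod.natCast_self, zero_add,
    ← Nat.cast_zero (R := ZMod n)]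
  exact eventuallyFree_zero_y hc hl2n (by omega) (by omega)

lemma eventuallyFree_of_blocked (hc : ShortClusters n l1 l2 d) (hl1n : l1 + 2 * d ≤ n)
    (hl2n : n < l2 + 2 * d) {s : State n} (h : blocked1 n l1 l2 d s ∨ blocked2 n l1 l2 d s) :
    EventuallyFree n l1 l2 d s := by
  have ⟨hl1, hl2, hl1d, hl2d, hdn⟩ := hc
  obtain ⟨a, b⟩ := s
  obtain ⟨x, hx, rfl⟩ := ZMod.exists_natCast_eq (by omega) a
  obtain ⟨y, hy, rfl⟩ := ZMod.exists_natCast_eq (by omega) b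
  rw [blocked1_natCast_iff hl2 (by omega) hx hy, blocked2_natCast_iff hl1 (by omega) hx hy] at h
  rcases h with (⟨rfl, hdy, hy⟩ | ⟨rfl, hy0, hy⟩) | (⟨rfl, hdx, hx⟩ | ⟨rfl, hx0, hx⟩)
  · exact eventuallyFree_zero_y hc hl2n hdy hy.le
  · exact eventuallyFree_d_y hc hy0 hy.le
  · exact eventuallyFree_x_zero hc hl1n hl2n hdx hx.le
  · exact eventuallyFree_x_d hc hx0 hx.le

end ShortClusters

theorem stmt6_general (n l1 l2 d : ℕ) (hl1pos : 0 < l1)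
    (h1 : l2 ≤ d) (h2 : l1 ≤ n - 2 * d) (h3 : l2 > n - 2 * d) :
    ∀ s : State n, Admissible n l1 l2 d s →
      ∃ t0 : ℕ, FreeState n l1 l2 d ((step n l1 l2 d)^[t0] s) := by
  have hc : ShortClusters n l1 l2 d := ⟨hl1pos, by omega, by omega, h1, by omega⟩
  exact fun s _ => eventuallyFree_of_forall_blocked
    (fun _ => eventuallyFree_of_blocked hc (by omega) (by omega)) s

theorem stmt6 (n l1 l2 d : ℕ) (hn : 0 < n) (hd : 0 < d) (h2d : 2 * d ≤ n)
    (hl1pos : 0 < l1) (hl1n : l1 < n) (hl2pos : 0 < l2) (hl2n : l2 < n) (h12 : l1 ≤ l2)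
    (h1 : l2 ≤ d) (h2 : l1 ≤ n - 2 * d) (h3 : l2 > n - 2 * d) :
    ∀ s : State n, Admissible n l1 l2 d s →
      ∃ t0 : ℕ, FreeState n l1 l2 d ((step n l1 l2 d)^[t0] s) :=
  stmt6_general n l1 l2 d hl1pos h1 h2 h3

end TwoContour
end

section
/- If l₂ ≤ d and l₁ > n − 2d, then the two-contour system enters a state of free motion from every admissible initial state. -/
open scoped Classical

namespace TwoContour

-- ==================== auxiliary development ====================

variable {n l1 l2 d : ℕ}

/-- All numeric hypotheses bundled. -/
def Hyp (n l1 l2 d : ℕ) : Prop :=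
  0 < n ∧ 0 < d ∧ 2 * d ≤ n ∧ 0 < l1 ∧ l1 < n ∧ 0 < l2 ∧ l2 < n ∧ l1 ≤ l2 ∧ l2 ≤ d ∧
    l1 > n - 2 * d

lemma cast_sub_dvd {a b : ℕ} (h : (a : ZMod n) = (b : ZMod n)) (hba : b ≤ a) : n ∣ a - b := by
  have h' : b ≡ a [MOD n] := ((ZMod.natCast_eq_natCast_iff a b n).mp h).symm
  exact (Nat.modEq_iff_dvd' hba).mp h'

lemma dvd_bound (hn : 0 < n) {w : ℕ} (hdvd : n ∣ w) (hlt : w < 2 * n) (h0 : 0 < w)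
    (hne : w ≠ n) : False := by
  obtain ⟨c, rfl⟩ := hdvd
  rcases c with _ | _ | c
  · simp at h0
  · simp at hne
  · have h2 : 2 * n ≤ n * (c + 2) := by nlinarith
    exact absurd hlt (not_lt.mpr h2)

lemma exclude_eq (hn : 0 < n) {a b : ℕ} (h : (a : ZMod n) = (b : ZMod n)) (hba : b ≤ a)
    (hlt : a - b < 2 * n) (h0 : b < a) (hne : a - b ≠ n) : False :=
  dvd_bound hn (cast_sub_dvd h hba) hlt (by omega) hne

lemma cast_injn {a b : ℕ} (h : (a : ZMod n) = (b : ZMod n)) (ha : a < n) (hb : b < n) :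
    a = b := by
  have h' := (ZMod.natCast_eq_natCast_iff' a b n).mp h
  rwa [Nat.mod_eq_of_lt ha, Nat.mod_eq_of_lt hb] at h'

lemma occ_pair {l : ℕ} (hl : l < n) (β c : ZMod n) :
    occ n β l c ∧ occ n β l (c + 1) ↔ ∃ k : ℕ, 1 ≤ k ∧ k < l ∧ β = c + k := by
  constructor
  · rintro ⟨⟨k, hk, hck⟩, ⟨j, hj, hcj⟩⟩
    have hkj : ((k : ℕ) : ZMod n) = ((j + 1 : ℕ) : ZMod n) := by
      push_cast
      linear_combination hck - hcj
    have hkj' : k = j + 1 := cast_injn hkj (by omega) (by omega)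
    exact ⟨k, by omega, by omega, by linear_combination -hck⟩
  · rintro ⟨k, hk1, hk2, hβ⟩
    refine ⟨⟨k, hk2, by rw [hβ]; ring⟩, ⟨k - 1, by omega, ?_⟩⟩
    rw [hβ]
    have : ((k - 1 : ℕ) : ZMod n) = (k : ZMod n) - 1 := by
      push_cast [Nat.cast_sub hk1]
      ring
    rw [this]; ring

lemma blocked1_iff (hl2n : l2 < n) (hl2p : 0 < l2) (s : State n) :
    blocked1 n l1 l2 d s ↔
      (s.1 = 0 ∧ ∃ k : ℕ, k < l2 ∧ s.2 = (d : ZMod n) + k) ∨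
      (s.1 = (d : ZMod n) ∧ ∃ k : ℕ, 1 ≤ k ∧ k < l2 ∧ s.2 = (k : ZMod n)) := by
  constructor
  · rintro (⟨h0, hocc | hdd⟩ | ⟨hdd, hocc⟩)
    · obtain ⟨k, _, hk2, hk3⟩ := (occ_pair hl2n s.2 _).mp hocc
      exact Or.inl ⟨h0, k, hk2, hk3⟩
    · exact Or.inl ⟨h0, 0, hl2p, by simpa using hdd⟩
    · have h' : occ n s.2 l2 0 ∧ occ n s.2 l2 (0 + 1) := by simpa using hocc
      obtain ⟨k, hk1, hk2, hk3⟩ := (occ_pair hl2n s.2 _).mp h'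
      exact Or.inr ⟨hdd, k, hk1, hk2, by simpa using hk3⟩
  · rintro (⟨h0, k, hk, hs⟩ | ⟨hdd, k, hk1, hk2, hs⟩)
    · rcases Nat.eq_zero_or_pos k with rfl | hpos
      · exact Or.inl ⟨h0, Or.inr (by simpa using hs)⟩
      · exact Or.inl ⟨h0, Or.inl ((occ_pair hl2n s.2 _).mpr ⟨k, hpos, hk, hs⟩)⟩
    · refine Or.inr ⟨hdd, ?_⟩
      have h' := (occ_pair hl2n s.2 (0 : ZMod n)).mpr ⟨k, hk1, hk2, by simpa using hs⟩
      simpa using h'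

lemma blocked2_iff (hl1n : l1 < n) (hl1p : 0 < l1) (s : State n) :
    blocked2 n l1 l2 d s ↔
      (s.2 = 0 ∧ ∃ k : ℕ, k < l1 ∧ s.1 = (d : ZMod n) + k) ∨
      (s.2 = (d : ZMod n) ∧ ∃ k : ℕ, 1 ≤ k ∧ k < l1 ∧ s.1 = (k : ZMod n)) := by
  constructor
  · rintro (⟨h0, hocc | hdd⟩ | ⟨hdd, hocc⟩)
    · obtain ⟨k, _, hk2, hk3⟩ := (occ_pair hl1n s.1 _).mp hocc
      exact Or.inl ⟨h0, k, hk2, hk3⟩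
    · exact Or.inl ⟨h0, 0, hl1p, by simpa using hdd⟩
    · have h' : occ n s.1 l1 0 ∧ occ n s.1 l1 (0 + 1) := by simpa using hocc
      obtain ⟨k, hk1, hk2, hk3⟩ := (occ_pair hl1n s.1 _).mp h'
      exact Or.inr ⟨hdd, k, hk1, hk2, by simpa using hk3⟩
  · rintro (⟨h0, k, hk, hs⟩ | ⟨hdd, k, hk1, hk2, hs⟩)
    · rcases Nat.eq_zero_or_pos k with rfl | hpos
      · exact Or.inl ⟨h0, Or.inr (by simpa using hs)⟩
      · exact Or.inl ⟨h0, Or.inl ((occ_pair hl1n s.1 _).mpr ⟨k, hpos, hk, hs⟩)⟩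
    · refine Or.inr ⟨hdd, ?_⟩
      have h' := (occ_pair hl1n s.1 (0 : ZMod n)).mpr ⟨k, hk1, hk2, by simpa using hs⟩
      simpa using h'


/-- Bad phase-differences: those at which some delay can occur. -/
def Bad (n l1 l2 d : ℕ) (δ : ZMod n) : Prop :=
  (∃ k : ℕ, k < l2 ∧ δ = (d : ZMod n) + k) ∨
  (∃ k : ℕ, 1 ≤ k ∧ k < l2 ∧ δ = (k : ZMod n) - d) ∨
  (∃ k : ℕ, k < l1 ∧ δ = -((d : ZMod n) + k)) ∨
  (∃ k : ℕ, 1 ≤ k ∧ k < l1 ∧ δ = (d : ZMod n) - k)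

lemma not_blocked_of_not_bad (hl1n : l1 < n) (hl1p : 0 < l1) (hl2n : l2 < n) (hl2p : 0 < l2)
    (x : State n) (hB : ¬ Bad n l1 l2 d (x.2 - x.1)) :
    ¬ blocked1 n l1 l2 d x ∧ ¬ blocked2 n l1 l2 d x := by
  constructor
  · intro hb
    rw [blocked1_iff hl2n hl2p] at hb
    rcases hb with ⟨h0, k, hk, hs⟩ | ⟨hdd, k, hk1, hk2, hs⟩
    · exact hB (Or.inl ⟨k, hk, by rw [hs, h0]; ring⟩)
    · exact hB (Or.inr <| Or.inl ⟨k, hk1, hk2, by rw [hs, hdd]⟩)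
  · intro hb
    rw [blocked2_iff hl1n hl1p] at hb
    rcases hb with ⟨h0, k, hk, hs⟩ | ⟨hdd, k, hk1, hk2, hs⟩
    · exact hB (Or.inr <| Or.inr <| Or.inl ⟨k, hk, by rw [h0, hs]; ring⟩)
    · exact hB (Or.inr <| Or.inr <| Or.inr ⟨k, hk1, hk2, by rw [hdd, hs]⟩)

lemma step_eq_of_not_blocked (x : State n) (h1 : ¬ blocked1 n l1 l2 d x)
    (h2 : ¬ blocked2 n l1 l2 d x) : step n l1 l2 d x = (x.1 + 1, x.2 + 1) := by
  simp [step, h1, h2]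

lemma step_eq_of_blocked1 (x : State n) (h1 : blocked1 n l1 l2 d x)
    (h2 : ¬ blocked2 n l1 l2 d x) : step n l1 l2 d x = (x.1, x.2 + 1) := by
  simp [step, h1, h2]

lemma step_eq_of_blocked2 (x : State n) (h1 : ¬ blocked1 n l1 l2 d x)
    (h2 : blocked2 n l1 l2 d x) : step n l1 l2 d x = (x.1 + 1, x.2) := by
  simp [step, h1, h2]

lemma free_of_not_bad (H : Hyp n l1 l2 d) (s : State n)
    (hB : ¬ Bad n l1 l2 d (s.2 - s.1)) : FreeState n l1 l2 d s := by
  obtain ⟨hn, hd, h2d, hl1p, hl1n, hl2p, hl2n, h12, h1, hgt⟩ := H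
  have key : ∀ x : State n, x.2 - x.1 = s.2 - s.1 →
      ¬ blocked1 n l1 l2 d x ∧ ¬ blocked2 n l1 l2 d x := by
    intro x hx
    exact not_blocked_of_not_bad hl1n hl1p hl2n hl2p x (by rw [hx]; exact hB)
  have htraj : ∀ t : ℕ, (step n l1 l2 d)^[t] s = (s.1 + (t : ZMod n), s.2 + (t : ZMod n)) := by
    intro t
    induction t with
    | zero => simp
    | succ v ih =>
      have hnb := key (s.1 + (v : ZMod n), s.2 + (v : ZMod n)) (by ring)
      rw [Function.iterate_succ_apply', ih, step_eq_of_not_blocked _ hnb.1 hnb.2]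
      simp only [Prod.mk.injEq]
      constructor <;> · push_cast; ring
  intro t
  rw [htraj t]
  exact key _ (by ring)

lemma exists_first_block (H : Hyp n l1 l2 d) (s : State n)
    (hB : Bad n l1 l2 d (s.2 - s.1)) :
    ∃ t : ℕ, (step n l1 l2 d)^[t] s = (s.1 + (t : ZMod n), s.2 + (t : ZMod n)) ∧
      (blocked1 n l1 l2 d ((step n l1 l2 d)^[t] s) ∨
       blocked2 n l1 l2 d ((step n l1 l2 d)^[t] s)) := by
  obtain ⟨hn, hd, h2d, hl1p, hl1n, hl2p, hl2n, h12, h1, hgt⟩ := H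
  haveI : NeZero n := ⟨by omega⟩
  have hex : ∃ t : ℕ,
      blocked1 n l1 l2 d (s.1 + (t : ZMod n), s.2 + (t : ZMod n)) ∨
      blocked2 n l1 l2 d (s.1 + (t : ZMod n), s.2 + (t : ZMod n)) := by
    rcases hB with ⟨k, hk, hδ⟩ | ⟨k, hk1, hk2, hδ⟩ | ⟨k, hk, hδ⟩ | ⟨k, hk1, hk2, hδ⟩
    · refine ⟨(-s.1).val, Or.inl ?_⟩
      rw [blocked1_iff hl2n hl2p]
      exact Or.inl ⟨by rw [ZMod.natCast_zmod_val]; ring, k, hk,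
        by rw [ZMod.natCast_zmod_val]; linear_combination hδ⟩
    · refine ⟨((d : ZMod n) - s.1).val, Or.inl ?_⟩
      rw [blocked1_iff hl2n hl2p]
      exact Or.inr ⟨by rw [ZMod.natCast_zmod_val]; ring, k, hk1, hk2,
        by rw [ZMod.natCast_zmod_val]; linear_combination hδ⟩
    · refine ⟨(-s.2).val, Or.inr ?_⟩
      rw [blocked2_iff hl1n hl1p]
      exact Or.inl ⟨by rw [ZMod.natCast_zmod_val]; ring, k, hk,
        by rw [ZMod.natCast_zmod_val]; linear_combination -hδ⟩
    · refine ⟨((d : ZMod n) - s.2).val, Or.inr ?_⟩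
      rw [blocked2_iff hl1n hl1p]
      exact Or.inr ⟨by rw [ZMod.natCast_zmod_val]; ring, k, hk1, hk2,
        by rw [ZMod.natCast_zmod_val]; linear_combination -hδ⟩
  have htraj : ∀ u : ℕ, u ≤ Nat.find hex →
      (step n l1 l2 d)^[u] s = (s.1 + (u : ZMod n), s.2 + (u : ZMod n)) := by
    intro u
    induction u with
    | zero => intro _; simp
    | succ v ih =>
      intro hu
      have hnb := Nat.find_min hex (show v < Nat.find hex by omega)
      rw [not_or] at hnb
      rw [Function.iterate_succ_apply', ih (by omega),
        step_eq_of_not_blocked _ hnb.1 hnb.2]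
      simp only [Prod.mk.injEq]
      constructor <;> · push_cast; ring
  exact ⟨Nat.find hex, htraj _ le_rfl, by rw [htraj _ le_rfl]; exact Nat.find_spec hex⟩


lemma step_b1a (H : Hyp n l1 l2 d) {k : ℕ} (hk : k < l2) :
    step n l1 l2 d ((0 : ZMod n), (d : ZMod n) + (k : ZMod n)) =
      ((0 : ZMod n), (d : ZMod n) + ((k + 1 : ℕ) : ZMod n)) := by
  obtain ⟨hn, hd, h2d, hl1p, hl1n, hl2p, hl2n, h12, h1, hgt⟩ := H
  have hb1 : blocked1 n l1 l2 d ((0 : ZMod n), (d : ZMod n) + (k : ZMod n)) :=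
    (blocked1_iff hl2n hl2p _).mpr (Or.inl ⟨rfl, k, hk, rfl⟩)
  have hb2 : ¬ blocked2 n l1 l2 d ((0 : ZMod n), (d : ZMod n) + (k : ZMod n)) := by
    rw [blocked2_iff hl1n hl1p]
    rintro (⟨hz, -⟩ | ⟨-, j, hj1, hj2, hj3⟩)
    · exact exclude_eq hn (a := d + k) (b := 0)
        (by push_cast; linear_combination hz) (by omega) (by omega) (by omega) (by omega)
    · have h0 : ((j : ℕ) : ZMod n) = ((0 : ℕ) : ZMod n) := by
        rw [Nat.cast_zero]; exact hj3.symm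
      have hj0 : j = 0 := cast_injn h0 (by omega) (by omega)
      omega
  rw [step_eq_of_blocked1 _ hb1 hb2]
  exact Prod.ext_iff.mpr ⟨rfl, by push_cast; ring⟩

lemma step_b1b (H : Hyp n l1 l2 d) {k : ℕ} (hk1 : 1 ≤ k) (hk : k < l2) :
    step n l1 l2 d ((d : ZMod n), (k : ZMod n)) = ((d : ZMod n), ((k + 1 : ℕ) : ZMod n)) := by
  obtain ⟨hn, hd, h2d, hl1p, hl1n, hl2p, hl2n, h12, h1, hgt⟩ := H
  have hb1 : blocked1 n l1 l2 d ((d : ZMod n), (k : ZMod n)) :=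
    (blocked1_iff hl2n hl2p _).mpr (Or.inr ⟨rfl, k, hk1, hk, rfl⟩)
  have hb2 : ¬ blocked2 n l1 l2 d ((d : ZMod n), (k : ZMod n)) := by
    rw [blocked2_iff hl1n hl1p]
    rintro (⟨hz, -⟩ | ⟨hdd, -⟩)
    · have h0 : ((k : ℕ) : ZMod n) = ((0 : ℕ) : ZMod n) := by
        rw [Nat.cast_zero]; exact hz
      have : k = 0 := cast_injn h0 (by omega) (by omega)
      omega
    · have : k = d := cast_injn hdd (by omega) (by omega)
      omega
  rw [step_eq_of_blocked1 _ hb1 hb2]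
  exact Prod.ext_iff.mpr ⟨rfl, by push_cast; ring⟩

lemma step_b2a (H : Hyp n l1 l2 d) {k : ℕ} (hk : k < l1) :
    step n l1 l2 d ((d : ZMod n) + (k : ZMod n), (0 : ZMod n)) =
      ((d : ZMod n) + ((k + 1 : ℕ) : ZMod n), (0 : ZMod n)) := by
  obtain ⟨hn, hd, h2d, hl1p, hl1n, hl2p, hl2n, h12, h1, hgt⟩ := H
  have hb2 : blocked2 n l1 l2 d ((d : ZMod n) + (k : ZMod n), (0 : ZMod n)) :=
    (blocked2_iff hl1n hl1p _).mpr (Or.inl ⟨rfl, k, hk, rfl⟩)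
  have hb1 : ¬ blocked1 n l1 l2 d ((d : ZMod n) + (k : ZMod n), (0 : ZMod n)) := by
    rw [blocked1_iff hl2n hl2p]
    rintro (⟨hz, -⟩ | ⟨-, j, hj1, hj2, hj3⟩)
    · exact exclude_eq hn (a := d + k) (b := 0)
        (by push_cast; linear_combination hz) (by omega) (by omega) (by omega) (by omega)
    · have h0 : ((j : ℕ) : ZMod n) = ((0 : ℕ) : ZMod n) := by
        rw [Nat.cast_zero]; exact hj3.symm
      have hj0 : j = 0 := cast_injn h0 (by omega) (by omega)
      omega
  rw [step_eq_of_blocked2 _ hb1 hb2]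
  exact Prod.ext_iff.mpr ⟨by push_cast; ring, rfl⟩

lemma step_b2b (H : Hyp n l1 l2 d) {k : ℕ} (hk1 : 1 ≤ k) (hk : k < l1) :
    step n l1 l2 d ((k : ZMod n), (d : ZMod n)) = (((k + 1 : ℕ) : ZMod n), (d : ZMod n)) := by
  obtain ⟨hn, hd, h2d, hl1p, hl1n, hl2p, hl2n, h12, h1, hgt⟩ := H
  have hb2 : blocked2 n l1 l2 d ((k : ZMod n), (d : ZMod n)) :=
    (blocked2_iff hl1n hl1p _).mpr (Or.inr ⟨rfl, k, hk1, hk, rfl⟩)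
  have hb1 : ¬ blocked1 n l1 l2 d ((k : ZMod n), (d : ZMod n)) := by
    rw [blocked1_iff hl2n hl2p]
    rintro (⟨hz, -⟩ | ⟨hdd, -⟩)
    · have h0 : ((k : ℕ) : ZMod n) = ((0 : ℕ) : ZMod n) := by
        rw [Nat.cast_zero]; exact hz
      have : k = 0 := cast_injn h0 (by omega) (by omega)
      omega
    · have : k = d := cast_injn hdd (by omega) (by omega)
      omega
  rw [step_eq_of_blocked2 _ hb1 hb2]
  exact Prod.ext_iff.mpr ⟨by push_cast; ring, rfl⟩

lemma phase1 (H : Hyp n l1 l2 d) :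
    ∀ i k : ℕ, k + i ≤ l2 →
      (step n l1 l2 d)^[i] ((0 : ZMod n), (d : ZMod n) + (k : ZMod n)) =
        ((0 : ZMod n), (d : ZMod n) + ((k + i : ℕ) : ZMod n)) := by
  intro i
  induction i with
  | zero => intro k _; simp
  | succ v ih =>
    intro k h
    rw [Function.iterate_succ_apply, step_b1a H (by omega), ih (k + 1) (by omega),
      show k + 1 + v = k + (v + 1) by omega]

lemma phase2 (H : Hyp n l1 l2 d) :
    ∀ i k : ℕ, 1 ≤ k → k + i ≤ l2 →
      (step n l1 l2 d)^[i] ((d : ZMod n), (k : ZMod n)) =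
        ((d : ZMod n), ((k + i : ℕ) : ZMod n)) := by
  intro i
  induction i with
  | zero => intro k _ _; simp
  | succ v ih =>
    intro k hk1 h
    rw [Function.iterate_succ_apply, step_b1b H hk1 (by omega), ih (k + 1) (by omega) (by omega),
      show k + 1 + v = k + (v + 1) by omega]

lemma phase3 (H : Hyp n l1 l2 d) :
    ∀ i k : ℕ, k + i ≤ l1 →
      (step n l1 l2 d)^[i] ((d : ZMod n) + (k : ZMod n), (0 : ZMod n)) =
        ((d : ZMod n) + ((k + i : ℕ) : ZMod n), (0 : ZMod n)) := by
  intro i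
  induction i with
  | zero => intro k _; simp
  | succ v ih =>
    intro k h
    rw [Function.iterate_succ_apply, step_b2a H (by omega), ih (k + 1) (by omega),
      show k + 1 + v = k + (v + 1) by omega]

lemma phase4 (H : Hyp n l1 l2 d) :
    ∀ i k : ℕ, 1 ≤ k → k + i ≤ l1 →
      (step n l1 l2 d)^[i] ((k : ZMod n), (d : ZMod n)) =
        (((k + i : ℕ) : ZMod n), (d : ZMod n)) := by
  intro i
  induction i with
  | zero => intro k _ _; simp
  | succ v ih =>
    intro k hk1 h
    rw [Function.iterate_succ_apply, step_b2b H hk1 (by omega), ih (k + 1) (by omega) (by omega),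
      show k + 1 + v = k + (v + 1) by omega]


lemma notbad_l2d (H : Hyp n l1 l2 d) : ¬ Bad n l1 l2 d ((l2 : ZMod n) - (d : ZMod n)) := by
  obtain ⟨hn, hd, h2d, hl1p, hl1n, hl2p, hl2n, h12, h1, hgt⟩ := H
  rintro (⟨k, hk, h⟩ | ⟨k, hk1, hk2, h⟩ | ⟨k, hk, h⟩ | ⟨k, hk1, hk2, h⟩)
  · exact exclude_eq hn (a := 2 * d + k) (b := l2)
      (by push_cast; linear_combination -h) (by omega) (by omega) (by omega) (by omega)
  · exact exclude_eq hn (a := l2) (b := k)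
      (by push_cast; linear_combination h) (by omega) (by omega) (by omega) (by omega)
  · exact exclude_eq hn (a := l2 + k) (b := 0)
      (by push_cast; linear_combination h) (by omega) (by omega) (by omega) (by omega)
  · exact exclude_eq hn (a := 2 * d) (b := l2 + k)
      (by push_cast; linear_combination -h) (by omega) (by omega) (by omega) (by omega)

lemma notbad_dl1 (H : Hyp n l1 l2 d) : ¬ Bad n l1 l2 d ((d : ZMod n) - (l1 : ZMod n)) := by
  obtain ⟨hn, hd, h2d, hl1p, hl1n, hl2p, hl2n, h12, h1, hgt⟩ := H
  rintro (⟨k, hk, h⟩ | ⟨k, hk1, hk2, h⟩ | ⟨k, hk, h⟩ | ⟨k, hk1, hk2, h⟩)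
  · exact exclude_eq hn (a := l1 + k) (b := 0)
      (by push_cast; linear_combination -h) (by omega) (by omega) (by omega) (by omega)
  · exact exclude_eq hn (a := 2 * d) (b := l1 + k)
      (by push_cast; linear_combination h) (by omega) (by omega) (by omega) (by omega)
  · exact exclude_eq hn (a := 2 * d + k) (b := l1)
      (by push_cast; linear_combination h) (by omega) (by omega) (by omega) (by omega)
  · exact exclude_eq hn (a := l1) (b := k)
      (by push_cast; linear_combination -h) (by omega) (by omega) (by omega) (by omega)

lemma resolve_dplusl2 (H : Hyp n l1 l2 d) (s : State n)
    (hδ : s.2 - s.1 = (d : ZMod n) + (l2 : ZMod n)) :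
    ∃ t0 : ℕ, FreeState n l1 l2 d ((step n l1 l2 d)^[t0] s) := by
  by_cases hB : Bad n l1 l2 d (s.2 - s.1)
  · obtain ⟨t, htr, hbl⟩ := exists_first_block H s hB
    have Hc := H
    obtain ⟨hn, hd, h2d, hl1p, hl1n, hl2p, hl2n, h12, h1, hgt⟩ := Hc
    have hδx : ((step n l1 l2 d)^[t] s).2 - ((step n l1 l2 d)^[t] s).1 =
        (d : ZMod n) + (l2 : ZMod n) := by
      rw [htr]
      show s.2 + (t : ZMod n) - (s.1 + (t : ZMod n)) = _
      linear_combination hδ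
    rcases hbl with hb1 | hb2
    · rw [blocked1_iff hl2n hl2p] at hb1
      rcases hb1 with ⟨hx1, k, hk, hx2⟩ | ⟨hx1, k, hk1, hk2, hx2⟩
      · exfalso
        rw [hx1, hx2] at hδx
        have : l2 = k := cast_injn (a := l2) (b := k)
          (by push_cast; linear_combination -hδx) (by omega) (by omega)
        omega
      · have hxpair : (step n l1 l2 d)^[t] s = ((d : ZMod n), (k : ZMod n)) :=
          Prod.ext_iff.mpr ⟨hx1, hx2⟩
        refine ⟨(l2 - k) + t, ?_⟩
        rw [Function.iterate_add_apply, hxpair, phase2 H (l2 - k) k hk1 (by omega),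
          show k + (l2 - k) = l2 by omega]
        exact free_of_not_bad H _ (notbad_l2d H)
    · exfalso
      rw [blocked2_iff hl1n hl1p] at hb2
      rcases hb2 with ⟨hx2, k, hk, hx1⟩ | ⟨hx2, k, hk1, hk2, hx1⟩
      · rw [hx1, hx2] at hδx
        exact exclude_eq hn (a := 2 * d + l2 + k) (b := 0)
          (by push_cast; linear_combination -hδx) (by omega) (by omega) (by omega) (by omega)
      · rw [hx1, hx2] at hδx
        exact exclude_eq hn (a := l2 + k) (b := 0)
          (by push_cast; linear_combination -hδx) (by omega) (by omega) (by omega) (by omega)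
  · exact ⟨0, by rw [Function.iterate_zero_apply]; exact free_of_not_bad H s hB⟩

lemma resolve_negdl1 (H : Hyp n l1 l2 d) (s : State n)
    (hδ : s.2 - s.1 = -((d : ZMod n) + (l1 : ZMod n))) :
    ∃ t0 : ℕ, FreeState n l1 l2 d ((step n l1 l2 d)^[t0] s) := by
  by_cases hB : Bad n l1 l2 d (s.2 - s.1)
  · obtain ⟨t, htr, hbl⟩ := exists_first_block H s hB
    have Hc := H
    obtain ⟨hn, hd, h2d, hl1p, hl1n, hl2p, hl2n, h12, h1, hgt⟩ := Hc
    have hδx : ((step n l1 l2 d)^[t] s).2 - ((step n l1 l2 d)^[t] s).1 =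
        -((d : ZMod n) + (l1 : ZMod n)) := by
      rw [htr]
      show s.2 + (t : ZMod n) - (s.1 + (t : ZMod n)) = _
      linear_combination hδ
    rcases hbl with hb1 | hb2
    · exfalso
      rw [blocked1_iff hl2n hl2p] at hb1
      rcases hb1 with ⟨hx1, k, hk, hx2⟩ | ⟨hx1, k, hk1, hk2, hx2⟩
      · rw [hx1, hx2] at hδx
        exact exclude_eq hn (a := 2 * d + l1 + k) (b := 0)
          (by push_cast; linear_combination hδx) (by omega) (by omega) (by omega) (by omega)
      · rw [hx1, hx2] at hδx
        exact exclude_eq hn (a := l1 + k) (b := 0)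
          (by push_cast; linear_combination hδx) (by omega) (by omega) (by omega) (by omega)
    · rw [blocked2_iff hl1n hl1p] at hb2
      rcases hb2 with ⟨hx2, k, hk, hx1⟩ | ⟨hx2, k, hk1, hk2, hx1⟩
      · exfalso
        rw [hx1, hx2] at hδx
        have : k = l1 := cast_injn (a := k) (b := l1)
          (by push_cast; linear_combination -hδx) (by omega) (by omega)
        omega
      · have hxpair : (step n l1 l2 d)^[t] s = ((k : ZMod n), (d : ZMod n)) :=
          Prod.ext_iff.mpr ⟨hx1, hx2⟩
        refine ⟨(l1 - k) + t, ?_⟩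
        rw [Function.iterate_add_apply, hxpair, phase4 H (l1 - k) k hk1 (by omega),
          show k + (l1 - k) = l1 by omega]
        exact free_of_not_bad H _ (notbad_dl1 H)
  · exact ⟨0, by rw [Function.iterate_zero_apply]; exact free_of_not_bad H s hB⟩


theorem reach_free (n l1 l2 d : ℕ) (hn : 0 < n) (hd : 0 < d) (h2d : 2 * d ≤ n)
    (hl1pos : 0 < l1) (hl1n : l1 < n) (hl2pos : 0 < l2) (hl2n : l2 < n) (h12 : l1 ≤ l2)
    (h1 : l2 ≤ d) (h2 : l1 > n - 2 * d) :
    ∀ s : State n,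
      ∃ t0 : ℕ, FreeState n l1 l2 d ((step n l1 l2 d)^[t0] s) := by
  intro s
  have H : Hyp n l1 l2 d := ⟨hn, hd, h2d, hl1pos, hl1n, hl2pos, hl2n, h12, h1, h2⟩
  by_cases hB : Bad n l1 l2 d (s.2 - s.1)
  · obtain ⟨t, htr, hbl⟩ := exists_first_block H s hB
    rcases hbl with hb1 | hb2
    · rw [blocked1_iff hl2n hl2pos] at hb1
      rcases hb1 with ⟨hx1, k, hk, hx2⟩ | ⟨hx1, k, hk1, hk2, hx2⟩
      · have hxpair : (step n l1 l2 d)^[t] s = ((0 : ZMod n), (d : ZMod n) + (k : ZMod n)) :=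
          Prod.ext_iff.mpr ⟨hx1, hx2⟩
        have hy : (step n l1 l2 d)^[(l2 - k) + t] s =
            ((0 : ZMod n), (d : ZMod n) + (l2 : ZMod n)) := by
          rw [Function.iterate_add_apply, hxpair, phase1 H (l2 - k) k (by omega),
            show k + (l2 - k) = l2 by omega]
        obtain ⟨u, hu⟩ := resolve_dplusl2 H ((step n l1 l2 d)^[(l2 - k) + t] s) (by
          rw [hy]
          show (d : ZMod n) + (l2 : ZMod n) - 0 = _
          ring)
        exact ⟨u + ((l2 - k) + t), by rw [Function.iterate_add_apply]; exact hu⟩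
      · have hxpair : (step n l1 l2 d)^[t] s = ((d : ZMod n), (k : ZMod n)) :=
          Prod.ext_iff.mpr ⟨hx1, hx2⟩
        refine ⟨(l2 - k) + t, ?_⟩
        rw [Function.iterate_add_apply, hxpair, phase2 H (l2 - k) k hk1 (by omega),
          show k + (l2 - k) = l2 by omega]
        exact free_of_not_bad H _ (notbad_l2d H)
    · rw [blocked2_iff hl1n hl1pos] at hb2
      rcases hb2 with ⟨hx2, k, hk, hx1⟩ | ⟨hx2, k, hk1, hk2, hx1⟩
      · have hxpair : (step n l1 l2 d)^[t] s = ((d : ZMod n) + (k : ZMod n), (0 : ZMod n)) :=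
          Prod.ext_iff.mpr ⟨hx1, hx2⟩
        have hy : (step n l1 l2 d)^[(l1 - k) + t] s =
            ((d : ZMod n) + (l1 : ZMod n), (0 : ZMod n)) := by
          rw [Function.iterate_add_apply, hxpair, phase3 H (l1 - k) k (by omega),
            show k + (l1 - k) = l1 by omega]
        obtain ⟨u, hu⟩ := resolve_negdl1 H ((step n l1 l2 d)^[(l1 - k) + t] s) (by
          rw [hy]
          show (0 : ZMod n) - ((d : ZMod n) + (l1 : ZMod n)) = _
          ring)
        exact ⟨u + ((l1 - k) + t), by rw [Function.iterate_add_apply]; exact hu⟩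
      · have hxpair : (step n l1 l2 d)^[t] s = ((k : ZMod n), (d : ZMod n)) :=
          Prod.ext_iff.mpr ⟨hx1, hx2⟩
        refine ⟨(l1 - k) + t, ?_⟩
        rw [Function.iterate_add_apply, hxpair, phase4 H (l1 - k) k hk1 (by omega),
          show k + (l1 - k) = l1 by omega]
        exact free_of_not_bad H _ (notbad_dl1 H)
  · exact ⟨0, by rw [Function.iterate_zero_apply]; exact free_of_not_bad H s hB⟩


theorem stmt7 (n l1 l2 d : ℕ) (hn : 0 < n) (hd : 0 < d) (h2d : 2 * d ≤ n)
    (hl1pos : 0 < l1) (hl1n : l1 < n) (hl2pos : 0 < l2) (hl2n : l2 < n) (h12 : l1 ≤ l2)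
    (h1 : l2 ≤ d) (h2 : l1 > n - 2 * d) :
    ∀ s : State n, Admissible n l1 l2 d s →
      ∃ t0 : ℕ, FreeState n l1 l2 d ((step n l1 l2 d)^[t0] s) := by
  intro s _
  exact reach_free n l1 l2 d hn hd h2d hl1pos hl1n hl2pos hl2n h12 h1 h2 s

end TwoContour
end
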